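/- arXiv:1710.01252 — 5 statements merged into one kernel-verified Lean document; each statement's English description precedes it below -/
import Mathlib

section
/- Let g be an analytic function on the unit disc 𝔻 such that the measure μ_g is finite, i.e. ∫_𝔻 |g'(z)|² log(1/|z|) dA(z) < ∞ (equivalently, g ∈ H²). Then for every ε > 0 there exists a compact set K ⊂ 𝕋 such that m(𝕋 ∖ K) < ε and sup_{ζ∈K} μ_g(W(ζ,h)) = o(h) as h → 0, i.e. lim_{h→0⁺} sup_{ζ∈K} μ_g(W(ζ,h))/h = 0. -/
open MeasureTheory Set Metric Complex Filter Topology ENNReal NNReal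

noncomputable section

/-- Hardy space "norm" (valued in `ℝ≥0∞`):
`‖f‖_{H^p} = sup_{0 ≤ r < 1} ((1/2π) ∫₀^{2π} |f(r e^{iθ})|^p dθ)^{1/p}`. -/
def eHpNorm (p : ℝ) (f : ℂ → ℂ) : ℝ≥0∞ :=
  ⨆ r ∈ Set.Ico (0:ℝ) 1,
    ((∫⁻ θ in Set.Ioc (0:ℝ) (2 * Real.pi),
        (‖f ((r : ℂ) * Complex.exp ((θ : ℂ) * Complex.I))‖₊ : ℝ≥0∞) ^ p) /
      ENNReal.ofReal (2 * Real.pi)) ^ (1/p)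

/-- The generalised Volterra operator
`T_g f (z) = ∫₀^z f(w) g'(w) dw = z ∫₀^1 f(tz) g'(tz) dt`. -/
def volterra (g f : ℂ → ℂ) (z : ℂ) : ℂ :=
  z * ∫ t in (0:ℝ)..1, f ((t : ℂ) * z) * deriv g ((t : ℂ) * z)

/-- `g` belongs to BMOA: `sup_{a ∈ 𝔻} ‖g ∘ σ_a - g(a)‖_{H²} < ∞`, where
`σ_a(z) = (a - z)/(1 - conj a · z)`. -/
def MemBMOA (g : ℂ → ℂ) : Prop :=
  ∃ C : ℝ, ∀ a ∈ Metric.ball (0:ℂ) 1,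
    eHpNorm 2 (fun z => g ((a - z) / (1 - (starRingEnd ℂ) a * z)) - g a) ≤ ENNReal.ofReal C

/-- Normalised Lebesgue (arc-length) measure on the unit circle `𝕋 ⊆ ℂ`. -/
def circleMeasure : Measure ℂ :=
  (ENNReal.ofReal (2 * Real.pi))⁻¹ •
    Measure.map (fun θ : ℝ => Complex.exp ((θ : ℂ) * Complex.I))
      (volume.restrict (Set.Ioc (0:ℝ) (2 * Real.pi)))

/-- Area measure on `ℂ` normalised so that `A(𝔻) = 1`. -/
def areaMeasure : Measure ℂ := (ENNReal.ofReal Real.pi)⁻¹ • volume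

/-- The measure `dμ_g(z) = |g'(z)|² log(1/|z|) dA(z)` on the unit disc. -/
def muG (g : ℂ → ℂ) : Measure ℂ :=
  (areaMeasure.restrict (Metric.ball (0:ℂ) 1)).withDensity
    (fun z => ENNReal.ofReal (‖deriv g z‖ ^ 2 * Real.log (1 / ‖z‖)))

/-- The Carleson window `W(ζ,h)`. -/
def carlesonWindow (ζ : ℂ) (h : ℝ) : Set ℂ :=
  {z : ℂ | 1 - h < ‖z‖ ∧ ‖z‖ < 1 ∧ |Complex.arg (z / ζ)| < h}

/-- The open arc `I(ζ,h) ⊆ 𝕋` of angular radius `h` centred at `ζ`. -/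
def circleArc (ζ : ℂ) (h : ℝ) : Set ℂ :=
  {ξ : ℂ | ξ ∈ Metric.sphere (0:ℂ) 1 ∧ |Complex.arg (ξ / ζ)| < h}

/-- The Stolz domain `S(ζ)`: the interior of the convex hull of `{|z| < 1/2} ∪ {ζ}`. -/
def stolzDomain (ζ : ℂ) : Set ℂ :=
  interior (convexHull ℝ (Metric.ball (0:ℂ) (1/2) ∪ {ζ}))

/-- The Cesàro operator `C f (z) = (1/z) ∫₀^z f(w)/(1-w) dw = ∫₀^1 f(tz)/(1-tz) dt`. -/
def cesaro (f : ℂ → ℂ) (z : ℂ) : ℂ :=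
  ∫ t in (0:ℝ)..1, f ((t : ℂ) * z) / (1 - (t : ℂ) * z)

/-- Order of the zero of `f` at `z` (least `n` with nonvanishing `n`-th derivative). -/
def zeroOrder (f : ℂ → ℂ) (z : ℂ) : ℕ := sInf {n : ℕ | iteratedDeriv n f z ≠ 0}

/-- The Nevanlinna counting function `N_φ(w) = Σ_{z ∈ φ⁻¹(w) ∩ 𝔻} log(1/|z|)`, preimages
counted with multiplicity (the order of the zero of `φ - w`). -/
def nevanlinna (φ : ℂ → ℂ) (w : ℂ) : ℝ :=
  ∑' z : {z : ℂ // z ∈ Metric.ball (0:ℂ) 1 ∧ φ z = w},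
    (zeroOrder (fun u => φ u - w) (z : ℂ) : ℝ) * Real.log (1 / ‖(z : ℂ)‖)

/-- `f n → 0` uniformly on every compact subset of the unit disc. -/
def TendstoZeroOnCompacts (f : ℕ → ℂ → ℂ) : Prop :=
  ∀ Q : Set ℂ, Q ⊆ Metric.ball (0:ℂ) 1 → IsCompact Q →
    TendstoUniformlyOn (fun n z => f n z) 0 Filter.atTop Q

end


lemma abs_exp_mul_I_sub_one (x : ℝ) :
    ‖Complex.exp ((x:ℂ) * Complex.I) - 1‖ = 2 * |Real.sin (x / 2)| := by
  rw [Real.abs_sin_half, Complex.norm_def]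
  have hre : (Complex.exp ((x:ℂ) * Complex.I) - 1).re = Real.cos x - 1 := by
    simp [Complex.exp_ofReal_mul_I_re]
  have him : (Complex.exp ((x:ℂ) * Complex.I) - 1).im = Real.sin x := by
    simp [Complex.exp_ofReal_mul_I_im]
  have hn : Complex.normSq (Complex.exp ((x:ℂ) * Complex.I) - 1) = 2 - 2 * Real.cos x := by
    rw [Complex.normSq_apply, hre, him]
    have := Real.sin_sq_add_cos_sq x
    nlinarith
  rw [hn]
  rw [show (2:ℝ) - 2 * Real.cos x = 4 * ((1 - Real.cos x)/2) by ring]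
  rw [Real.sqrt_mul (by norm_num : (0:ℝ) ≤ 4)]
  rw [show Real.sqrt 4 = 2 by
    rw [show (4:ℝ) = 2^2 by norm_num, Real.sqrt_sq (by norm_num : (0:ℝ) ≤ 2)]]

lemma abs_exp_mul_I_sub_one_le (x : ℝ) :
    ‖Complex.exp ((x:ℂ) * Complex.I) - 1‖ ≤ |x| := by
  rw [abs_exp_mul_I_sub_one]
  calc 2 * |Real.sin (x/2)| ≤ 2 * |x/2| := by
        have := Real.abs_sin_le_abs (x := x/2); linarith
    _ = |x| := by rw [abs_div, _root_.abs_two]; ring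
lemma measurable_expI : Measurable (fun θ : ℝ => Complex.exp ((θ:ℂ) * Complex.I)) :=
  (Complex.continuous_exp.comp ((Complex.continuous_ofReal).mul continuous_const)).measurable

lemma circleMeasure_apply {S : Set ℂ} (hS : MeasurableSet S) :
    circleMeasure S = (ENNReal.ofReal (2*Real.pi))⁻¹ *
      volume ((fun θ : ℝ => Complex.exp ((θ:ℂ) * Complex.I)) ⁻¹' S ∩ Set.Ioc 0 (2*Real.pi)) := by
  unfold circleMeasure
  rw [Measure.smul_apply, smul_eq_mul, Measure.map_apply measurable_expI hS,
    Measure.restrict_apply (measurable_expI hS)]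

lemma circleMeasure_univ : circleMeasure Set.univ = 1 := by
  rw [circleMeasure_apply MeasurableSet.univ]
  simp only [Set.preimage_univ, Set.univ_inter, Real.volume_Ioc]
  rw [sub_zero, ENNReal.inv_mul_cancel] <;>
    simp [Real.pi_pos, ENNReal.mul_eq_top, ENNReal.ofReal_ne_top, ENNReal.ofReal_pos.2 Real.two_pi_pos, (ENNReal.ofReal_pos.2 Real.two_pi_pos).ne']

instance : IsFiniteMeasure circleMeasure := ⟨by rw [circleMeasure_univ]; exact one_lt_top⟩

lemma circleMeasure_compl_sphere : circleMeasure ((Metric.sphere (0:ℂ) 1)ᶜ) = 0 := by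
  rw [circleMeasure_apply (isClosed_sphere.measurableSet).compl]
  have : (fun θ : ℝ => Complex.exp ((θ:ℂ) * Complex.I)) ⁻¹' (Metric.sphere (0:ℂ) 1)ᶜ = ∅ := by
    ext θ
    simp [Complex.dist_eq, Complex.norm_exp_ofReal_mul_I]
  simp [this]

lemma circleMeasure_ball : circleMeasure (Metric.ball (0:ℂ) 1) = 0 := by
  rw [circleMeasure_apply measurableSet_ball]
  have : (fun θ : ℝ => Complex.exp ((θ:ℂ) * Complex.I)) ⁻¹' (Metric.ball (0:ℂ) 1) = ∅ := by
    ext θ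
    simp [Complex.dist_eq, Complex.norm_exp_ofReal_mul_I]
  simp [this]

lemma muG_compl_ball (g : ℂ → ℂ) : muG g ((Metric.ball (0:ℂ) 1)ᶜ) = 0 := by
  unfold muG
  rw [withDensity_apply _ measurableSet_ball.compl,
    Measure.restrict_restrict measurableSet_ball.compl]
  simp

lemma muG_mutuallySingular (g : ℂ → ℂ) : muG g ⟂ₘ circleMeasure :=
  ⟨(Metric.ball (0:ℂ) 1)ᶜ, measurableSet_ball.compl, muG_compl_ball g,
    by rw [compl_compl]; exact circleMeasure_ball⟩
lemma sin_small_cases {x s : ℝ} (hlb : -(Real.pi/2) ≤ x) (hub : x ≤ 3*Real.pi/2)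
    (hsin : |Real.sin x| ≤ s) : |x| ≤ Real.pi/2 * s ∨ |x - Real.pi| ≤ Real.pi/2 * s := by
  have hπ := Real.pi_pos
  rcases le_or_gt x (Real.pi/2) with hc | hc
  · left
    have habs : |x| ≤ Real.pi/2 := abs_le.2 ⟨by linarith, hc⟩
    have h1 := Real.mul_abs_le_abs_sin habs
    have h2 : 2/Real.pi * |x| ≤ s := le_trans h1 hsin
    have : |x| = Real.pi/2 * (2/Real.pi * |x|) := by field_simp
    rw [this]
    exact mul_le_mul_of_nonneg_left h2 (by positivity)
  · right
    have habs : |x - Real.pi| ≤ Real.pi/2 := by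
      rw [abs_le]; constructor <;> nlinarith
    have h1 := Real.mul_abs_le_abs_sin habs
    have hsin' : |Real.sin (x - Real.pi)| ≤ s := by
      rw [Real.sin_sub_pi, abs_neg]; exact hsin
    have h2 : 2/Real.pi * |x - Real.pi| ≤ s := le_trans h1 hsin'
    have : |x - Real.pi| = Real.pi/2 * (2/Real.pi * |x - Real.pi|) := by field_simp
    rw [this]
    exact mul_le_mul_of_nonneg_left h2 (by positivity)

lemma circleMeasure_closedBall_le {ζ : ℂ} (hζ1 : ‖ζ‖ = 1) {r : ℝ} (hr : 0 ≤ r) :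
    circleMeasure (Metric.closedBall ζ r) ≤ ENNReal.ofReal r := by
  set t₀ := Complex.arg ζ with ht₀
  have hζe : Complex.exp ((t₀:ℂ) * Complex.I) = ζ := by
    have := Complex.norm_mul_exp_arg_mul_I ζ
    rwa [hζ1, Complex.ofReal_one, one_mul] at this
  rw [circleMeasure_apply measurableSet_closedBall]
  have hπ : (0:ℝ) < Real.pi := Real.pi_pos
  have hsub : (fun θ : ℝ => Complex.exp ((θ:ℂ) * Complex.I)) ⁻¹' Metric.closedBall ζ r ∩
        Set.Ioc 0 (2*Real.pi)
      ⊆ Set.Icc (t₀ - Real.pi*r/2) (t₀ + Real.pi*r/2) ∪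
        Set.Icc (t₀ + 2*Real.pi - Real.pi*r/2) (t₀ + 2*Real.pi + Real.pi*r/2) := by
    rintro θ ⟨hθ1, hθ2⟩
    simp only [Set.mem_preimage, Metric.mem_closedBall, Complex.dist_eq] at hθ1
    have key : ‖Complex.exp ((θ:ℂ)*Complex.I) - ζ‖ = 2 * |Real.sin ((θ - t₀)/2)| := by
      rw [← hζe, show ((θ:ℂ)*Complex.I) = ((θ - t₀ : ℝ):ℂ)*Complex.I + (t₀:ℂ)*Complex.I by
          push_cast; ring,
        Complex.exp_add, ← sub_one_mul, norm_mul, Complex.norm_exp_ofReal_mul_I, mul_one,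
        abs_exp_mul_I_sub_one]
    rw [key] at hθ1
    have harg1 : -Real.pi < t₀ := Complex.neg_pi_lt_arg ζ
    have harg2 : t₀ ≤ Real.pi := Complex.arg_le_pi ζ
    have hsin : |Real.sin ((θ - t₀)/2)| ≤ r/2 := by linarith
    have hlb : -(Real.pi/2) ≤ (θ - t₀)/2 := by nlinarith [hθ2.1]
    have hub : (θ - t₀)/2 ≤ 3*Real.pi/2 := by nlinarith [hθ2.2]
    rcases sin_small_cases hlb hub hsin with hcase | hcase
    · left
      rw [abs_le] at hcase
      rw [Set.mem_Icc]
      constructor <;> nlinarith [hcase.1, hcase.2]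
    · right
      rw [abs_le] at hcase
      rw [Set.mem_Icc]
      constructor <;> nlinarith [hcase.1, hcase.2]
  calc (ENNReal.ofReal (2*Real.pi))⁻¹ *
        volume ((fun θ : ℝ => Complex.exp ((θ:ℂ) * Complex.I)) ⁻¹' Metric.closedBall ζ r ∩
          Set.Ioc 0 (2*Real.pi))
      ≤ (ENNReal.ofReal (2*Real.pi))⁻¹ *
        (volume (Set.Icc (t₀ - Real.pi*r/2) (t₀ + Real.pi*r/2)) +
         volume (Set.Icc (t₀ + 2*Real.pi - Real.pi*r/2) (t₀ + 2*Real.pi + Real.pi*r/2))) := by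
        exact mul_le_mul_right (le_trans (measure_mono hsub) (measure_union_le _ _)) _
    _ = (ENNReal.ofReal (2*Real.pi))⁻¹ * (ENNReal.ofReal (2*Real.pi) * ENNReal.ofReal r) := by
        rw [Real.volume_Icc, Real.volume_Icc]
        rw [show t₀ + Real.pi*r/2 - (t₀ - Real.pi*r/2) = Real.pi*r by ring,
          show t₀ + 2*Real.pi + Real.pi*r/2 - (t₀ + 2*Real.pi - Real.pi*r/2) = Real.pi*r by ring,
          ← ENNReal.ofReal_add (by positivity) (by positivity),
          show Real.pi*r + Real.pi*r = 2*Real.pi*r by ring,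
          show ENNReal.ofReal (2*Real.pi*r) = ENNReal.ofReal (2*Real.pi) * ENNReal.ofReal r from
            (by rw [← ENNReal.ofReal_mul (by positivity)])]
    _ = ENNReal.ofReal r := by
        rw [← mul_assoc, ENNReal.inv_mul_cancel, one_mul]
        · exact (ENNReal.ofReal_pos.2 Real.two_pi_pos).ne'
        · exact ENNReal.ofReal_ne_top

lemma carlesonWindow_subset {ζ : ℂ} (hζ : ‖ζ‖ = 1) {h : ℝ} (h1 : h < 1) :
    carlesonWindow ζ h ⊆ Metric.closedBall ζ (2*h) := by
  rintro z ⟨hz1, hz2, hz3⟩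
  have ha : (0:ℝ) < ‖z‖ := by linarith
  have hζne : ζ ≠ 0 := by intro hc; rw [hc] at hζ; simp at hζ
  have hzpos : (0:ℝ) < h := lt_of_le_of_lt (abs_nonneg _) hz3
  set a : ℝ := ‖z‖ with haa
  set u : ℂ := z / (a:ℂ) with hu
  have hane : (a:ℂ) ≠ 0 := by exact_mod_cast ha.ne'
  have hu1 : ‖u‖ = 1 := by
    rw [hu, norm_div, Complex.norm_real, Real.norm_eq_abs, abs_of_pos ha, div_self ha.ne']
  have h1' : ‖z - u‖ = 1 - a := by
    have : z - u = z * (((a - 1)/a : ℝ) : ℂ) := by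
      rw [hu]; push_cast; field_simp
    rw [this, norm_mul, Complex.norm_real, Real.norm_eq_abs, ← haa, abs_div, abs_of_pos ha,
      abs_of_neg (by linarith : a - 1 < 0)]
    field_simp
    ring
  have harg : Complex.arg (u / ζ) = Complex.arg (z / ζ) := by
    have : u / ζ = ((a⁻¹ : ℝ) : ℂ) * (z / ζ) := by
      rw [hu]; push_cast; field_simp
    rw [this, Complex.arg_real_mul _ (inv_pos.2 ha)]
  have huζ : ‖u / ζ‖ = 1 := by rw [norm_div, hu1, hζ]; norm_num
  have hexp : Complex.exp ((Complex.arg (z/ζ) : ℂ) * Complex.I) = u / ζ := by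
    rw [← harg]
    have := Complex.norm_mul_exp_arg_mul_I (u/ζ)
    rwa [huζ, Complex.ofReal_one, one_mul] at this
  have h2' : ‖u - ζ‖ ≤ h := by
    have : u - ζ = (u/ζ - 1) * ζ := by field_simp
    rw [this, norm_mul, hζ, mul_one, ← hexp]
    exact le_trans (abs_exp_mul_I_sub_one_le _) (le_of_lt hz3)
  rw [Metric.mem_closedBall, Complex.dist_eq]
  calc ‖z - ζ‖ ≤ ‖z - u‖ + ‖u - ζ‖ := by
        exact norm_sub_le_norm_sub_add_norm_sub z u ζ
    _ ≤ (1 - a) + h := by rw [h1']; exact add_le_add_right h2' _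
    _ ≤ 2*h := by linarith
lemma carlesonWindow_mono {ζ : ℂ} {h q : ℝ} (hq : h ≤ q) :
    carlesonWindow ζ h ⊆ carlesonWindow ζ q := by
  rintro z ⟨h1, h2, h3⟩
  exact ⟨by linarith, h2, lt_of_lt_of_le h3 hq⟩

lemma ae_tendsto_window (g : ℂ → ℂ) (hfin : muG g Set.univ ≠ ⊤) :
    ∀ᵐ ζ ∂circleMeasure, Filter.Tendsto
      (fun h : ℝ => muG g (carlesonWindow ζ h) / ENNReal.ofReal h)
      (nhdsWithin 0 (Set.Ioi 0)) (nhds 0) := by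
  haveI : IsFiniteMeasure (muG g) := ⟨lt_top_iff_ne_top.2 hfin⟩
  have hbes := Besicovitch.ae_tendsto_rnDeriv (muG g) circleMeasure
  have hrn : (muG g).rnDeriv circleMeasure =ᵐ[circleMeasure] 0 :=
    (muG_mutuallySingular g).rnDeriv_ae_eq_zero
  have hsp : ∀ᵐ ζ ∂circleMeasure, ‖ζ‖ = 1 := by
    rw [ae_iff]
    have hss : {ζ : ℂ | ¬ ‖ζ‖ = 1} ⊆ (Metric.sphere (0:ℂ) 1)ᶜ := by
      intro ζ hζ hc
      exact hζ (by simpa [Complex.dist_eq] using hc)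
    exact measure_mono_null hss circleMeasure_compl_sphere
  filter_upwards [hbes, hrn, hsp] with ζ hb h0 hζ
  rw [h0] at hb
  simp only [Pi.zero_apply] at hb
  rw [ENNReal.tendsto_nhds_zero] at hb ⊢
  intro δ hδ
  rcases eq_or_ne δ ⊤ with rfl | hδt
  · exact Filter.Eventually.of_forall (fun _ => le_top)
  have hδ2 : (0:ℝ≥0∞) < δ/2 := ENNReal.div_pos hδ.ne' (by norm_num)
  have hb2 := hb (δ/2) hδ2
  have hmap : Filter.Tendsto (fun h : ℝ => 2*h) (nhdsWithin 0 (Set.Ioi 0))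
      (nhdsWithin 0 (Set.Ioi 0)) := by
    apply tendsto_nhdsWithin_of_tendsto_nhds_of_eventually_within
    · have h2 : Filter.Tendsto (fun h : ℝ => 2*h) (nhds 0) (nhds (2*0)) :=
        (continuous_const.mul continuous_id).tendsto 0
      simpa using h2.mono_left nhdsWithin_le_nhds
    · filter_upwards [self_mem_nhdsWithin] with x hx
      exact Set.mem_Ioi.2 (mul_pos two_pos hx)
  have hb3 := hmap.eventually hb2
  filter_upwards [hb3, Ioo_mem_nhdsGT_of_mem (Set.mem_Ico.mpr ⟨le_rfl, one_pos⟩)] with h hh hmem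
  set A := muG g (Metric.closedBall ζ (2*h)) with hA
  set M := circleMeasure (Metric.closedBall ζ (2*h)) with hMdef
  have hW : muG g (carlesonWindow ζ h) ≤ A :=
    measure_mono (carlesonWindow_subset hζ hmem.2)
  have hM : M ≤ 2 * ENNReal.ofReal h := by
    have := circleMeasure_closedBall_le hζ (by linarith [hmem.1] : (0:ℝ) ≤ 2*h)
    rwa [ENNReal.ofReal_mul two_pos.le, ENNReal.ofReal_ofNat] at this
  have hh0 : ENNReal.ofReal h ≠ 0 := (ENNReal.ofReal_pos.2 hmem.1).ne'
  have hht : ENNReal.ofReal h ≠ ⊤ := ENNReal.ofReal_ne_top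
  by_cases hM0 : M = 0
  · have hA0 : A = 0 := by
      by_contra hA0
      rw [hM0, ENNReal.div_zero hA0] at hh
      exact absurd (lt_of_le_of_lt hh (ENNReal.div_lt_top hδt (by norm_num))) (lt_irrefl _)
    have : muG g (carlesonWindow ζ h) = 0 := le_antisymm (hW.trans hA0.le) (by simp)
    simp [this]
  · have hMt : M ≠ ⊤ := measure_ne_top _ _
    have hA2 : A ≤ δ/2 * M := (ENNReal.div_le_iff_le_mul (Or.inl hM0) (Or.inl hMt)).1 hh
    calc muG g (carlesonWindow ζ h) / ENNReal.ofReal h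
        ≤ (δ/2 * (2 * ENNReal.ofReal h)) / ENNReal.ofReal h := by
          apply ENNReal.div_le_div_right
          exact le_trans hW (le_trans hA2 (mul_le_mul_right hM _))
      _ = δ := by
          rw [← mul_assoc, ENNReal.div_mul_cancel (by norm_num) (by norm_num),
            mul_div_assoc, ENNReal.div_self hh0 hht, mul_one]
noncomputable def Gfun (g : ℂ → ℂ) (n : ℕ) (ζ : ℂ) : ℝ≥0∞ :=
  ⨆ q : ℚ, ⨆ (_ : 0 < (q:ℝ) ∧ (q:ℝ) ≤ (2:ℝ)⁻¹^n),
    muG g (carlesonWindow ζ (q:ℝ)) / ENNReal.ofReal (q:ℝ)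

lemma measurable_window (g : ℂ → ℂ) (hfin : muG g Set.univ ≠ ⊤) (q : ℝ) :
    Measurable (fun ζ : ℂ => muG g (carlesonWindow ζ q)) := by
  haveI : IsFiniteMeasure (muG g) := ⟨lt_top_iff_ne_top.2 hfin⟩
  have hs : MeasurableSet {p : ℂ × ℂ | p.2 ∈ carlesonWindow p.1 q} := by
    have h1 : Measurable (fun p : ℂ × ℂ => ‖p.2‖) :=
      continuous_norm.measurable.comp measurable_snd
    have h2 : Measurable (fun p : ℂ × ℂ => |Complex.arg (p.2 / p.1)|) :=
      (_root_.continuous_abs.measurable).comp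
        (Complex.measurable_arg.comp (measurable_snd.div measurable_fst))
    have e : {p : ℂ × ℂ | p.2 ∈ carlesonWindow p.1 q} =
        {p : ℂ × ℂ | 1 - q < ‖p.2‖} ∩ {p | ‖p.2‖ < 1} ∩
        {p | |Complex.arg (p.2 / p.1)| < q} := by
      ext p
      simp only [Set.mem_setOf_eq, Set.mem_inter_iff, carlesonWindow]
      tauto
    rw [e]
    exact ((measurableSet_lt measurable_const h1).inter
      (measurableSet_lt h1 measurable_const)).inter (measurableSet_lt h2 measurable_const)
  have hmm := measurable_measure_prodMk_left (ν := muG g) hs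
  have heq : (fun ζ : ℂ => muG g (carlesonWindow ζ q)) =
      fun x => muG g (Prod.mk x ⁻¹' {p : ℂ × ℂ | p.2 ∈ carlesonWindow p.1 q}) := by
    funext x
    congr 1
  rw [heq]
  exact hmm

lemma measurable_Gfun (g : ℂ → ℂ) (hfin : muG g Set.univ ≠ ⊤) (n : ℕ) :
    Measurable (Gfun g n) := by
  apply Measurable.iSup
  intro q
  apply Measurable.iSup
  intro _
  exact (measurable_window g hfin (q:ℝ)).div measurable_const

lemma Gfun_antitone (g : ℂ → ℂ) (ζ : ℂ) : Antitone (fun n => Gfun g n ζ) := by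
  intro m n hmn
  apply iSup₂_le
  intro q hq
  have : (q:ℝ) ≤ (2:ℝ)⁻¹^m :=
    le_trans hq.2 (pow_le_pow_of_le_one (by norm_num) (by norm_num) hmn)
  exact le_iSup₂_of_le q ⟨hq.1, this⟩ le_rfl

lemma ae_tendsto_Gfun (g : ℂ → ℂ) (hfin : muG g Set.univ ≠ ⊤) :
    ∀ᵐ ζ ∂circleMeasure, Filter.Tendsto (fun n => Gfun g n ζ) Filter.atTop (nhds 0) := by
  filter_upwards [ae_tendsto_window g hfin] with ζ hζ
  rw [ENNReal.tendsto_nhds_zero]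
  intro δ hδ
  rw [ENNReal.tendsto_nhds_zero] at hζ
  have hev := hζ δ hδ
  rw [eventually_nhdsWithin_iff, Metric.eventually_nhds_iff] at hev
  obtain ⟨η, hη, hP⟩ := hev
  obtain ⟨N, hN⟩ : ∃ N : ℕ, (2:ℝ)⁻¹^N < η := by
    obtain ⟨N, hN⟩ := exists_pow_lt_of_lt_one hη (by norm_num : (2:ℝ)⁻¹ < 1)
    exact ⟨N, hN⟩
  rw [Filter.eventually_atTop]
  refine ⟨N, fun n hn => ?_⟩
  apply iSup₂_le
  intro q hq
  have hqη : |(q:ℝ) - 0| < η := by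
    rw [sub_zero, abs_of_pos hq.1]
    calc (q:ℝ) ≤ (2:ℝ)⁻¹^n := hq.2
      _ ≤ (2:ℝ)⁻¹^N := pow_le_pow_of_le_one (by norm_num) (by norm_num) hn
      _ < η := hN
  have := hP (y := (q:ℝ)) (by rw [Real.dist_eq]; exact hqη) (Set.mem_Ioi.2 hq.1)
  exact this

/-- If `μ_g` is finite (equivalently `g ∈ H²`), then for every `ε > 0` there is
a compact `K ⊆ 𝕋` with `m(𝕋 ∖ K) < ε` and `sup_{ζ∈K} μ_g(W(ζ,h)) = o(h)` as `h → 0⁺`. -/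
theorem muG_vanishing_carleson_on_large_set
    (g : ℂ → ℂ) (hg : DifferentiableOn ℂ g (Metric.ball (0:ℂ) 1))
    (hfin : muG g Set.univ ≠ ⊤) :
    ∀ ε : ℝ, 0 < ε →
      ∃ K : Set ℂ, K ⊆ Metric.sphere (0:ℂ) 1 ∧ IsCompact K ∧
        circleMeasure (Metric.sphere (0:ℂ) 1 \ K) < ENNReal.ofReal ε ∧
        Filter.Tendsto
          (fun h : ℝ => (⨆ ζ ∈ K, muG g (carlesonWindow ζ h)) / ENNReal.ofReal h)
          (nhdsWithin 0 (Set.Ioi 0)) (nhds 0) := by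
  intro ε hε
  haveI : IsFiniteMeasure (muG g) := ⟨lt_top_iff_ne_top.2 hfin⟩
  set B : ℕ → ℕ → Set ℂ := fun k n => {ζ | (((k:ℝ≥0∞))+1)⁻¹ < Gfun g n ζ} with hB
  have hBmeas : ∀ k n, MeasurableSet (B k n) := fun k n =>
    measurableSet_lt measurable_const (measurable_Gfun g hfin n)
  have hBanti : ∀ k, Antitone (fun n => B k n) := by
    intro k m n hmn ζ hζ
    exact lt_of_lt_of_le hζ (Gfun_antitone g ζ hmn)
  have hIz : ∀ k, circleMeasure (⋂ n, B k n) = 0 := by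
    intro k
    apply measure_mono_null
      (t := {ζ : ℂ | ¬ Filter.Tendsto (fun n => Gfun g n ζ) Filter.atTop (nhds 0)})
    · intro ζ hζ hten
      rw [ENNReal.tendsto_nhds_zero] at hten
      have hpos : (0:ℝ≥0∞) < (((k:ℝ≥0∞))+1)⁻¹ := ENNReal.inv_pos.2 (by simp)
      obtain ⟨n, hn⟩ := (hten _ hpos).exists
      exact absurd hn (not_le.2 (Set.mem_iInter.1 hζ n))
    · exact ae_iff.1 (ae_tendsto_Gfun g hfin)
  have hcont : ∀ k, Filter.Tendsto (fun n => circleMeasure (B k n)) Filter.atTop (nhds 0) := by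
    intro k
    have ht := tendsto_measure_iInter_atTop (μ := circleMeasure)
      (fun n => (hBmeas k n).nullMeasurableSet) (hBanti k) ⟨0, measure_ne_top _ _⟩
    rw [hIz k] at ht
    exact ht
  have hchoice : ∀ k : ℕ, ∃ N, circleMeasure (B k N) ≤ ENNReal.ofReal (ε/4) * (2:ℝ≥0∞)⁻¹^k := by
    intro k
    have hpos : (0:ℝ≥0∞) < ENNReal.ofReal (ε/4) * (2:ℝ≥0∞)⁻¹^k := by
      apply ENNReal.mul_pos
      · exact (ENNReal.ofReal_pos.2 (by linarith)).ne'
      · exact (ENNReal.pow_pos (ENNReal.inv_pos.2 (by norm_num)) k).ne'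
    exact ((hcont k).eventually_le_const hpos).exists
  choose N hN using hchoice
  set A := ⋃ k, B k (N k) with hA
  have hAmeas : MeasurableSet A := MeasurableSet.iUnion fun k => hBmeas k (N k)
  have hAle : circleMeasure A ≤ ENNReal.ofReal (ε/2) := by
    calc circleMeasure A ≤ ∑' k, circleMeasure (B k (N k)) := measure_iUnion_le _
      _ ≤ ∑' k, ENNReal.ofReal (ε/4) * (2:ℝ≥0∞)⁻¹^k := ENNReal.tsum_le_tsum hN
      _ = ENNReal.ofReal (ε/4) * ∑' k, (2:ℝ≥0∞)⁻¹^k := ENNReal.tsum_mul_left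
      _ = ENNReal.ofReal (ε/4) * 2 := by
          rw [ENNReal.tsum_geometric, ENNReal.one_sub_inv_two, inv_inv]
      _ = ENNReal.ofReal (ε/2) := by
          rw [show (2:ℝ≥0∞) = ENNReal.ofReal 2 by simp,
            ← ENNReal.ofReal_mul (by linarith)]
          congr 1
          ring
  set K₀ := Metric.sphere (0:ℂ) 1 \ A with hK₀
  have hK₀meas : MeasurableSet K₀ := isClosed_sphere.measurableSet.diff hAmeas
  obtain ⟨K, hKsub, hKcomp, hKlt⟩ := hK₀meas.exists_isCompact_lt_add (μ := circleMeasure) (measure_ne_top _ _)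
    (ε := ENNReal.ofReal (ε/4)) ((ENNReal.ofReal_pos.2 (by linarith)).ne')
  refine ⟨K, hKsub.trans Set.diff_subset, hKcomp, ?_, ?_⟩
  · have hdiff : circleMeasure (K₀ \ K) < ENNReal.ofReal (ε/4) :=
      measure_diff_lt_of_lt_add hKcomp.measurableSet.nullMeasurableSet hKsub
        (measure_ne_top _ _) hKlt
    have hsub2 : Metric.sphere (0:ℂ) 1 \ K ⊆ A ∪ (K₀ \ K) := by
      intro ζ hζ
      by_cases hA' : ζ ∈ A
      · exact Or.inl hA'
      · exact Or.inr ⟨⟨hζ.1, hA'⟩, hζ.2⟩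
    calc circleMeasure (Metric.sphere (0:ℂ) 1 \ K)
        ≤ circleMeasure A + circleMeasure (K₀ \ K) :=
          le_trans (measure_mono hsub2) (measure_union_le _ _)
      _ < ENNReal.ofReal (ε/2) + ENNReal.ofReal (ε/4) :=
          ENNReal.add_lt_add_of_le_of_lt (ne_top_of_le_ne_top ENNReal.ofReal_ne_top hAle)
            hAle hdiff
      _ ≤ ENNReal.ofReal ε := by
          rw [← ENNReal.ofReal_add (by linarith) (by linarith)]
          exact ENNReal.ofReal_le_ofReal (by linarith)
  · rw [ENNReal.tendsto_nhds_zero]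
    intro δ hδ
    rcases eq_or_ne δ ⊤ with rfl | hδt
    · exact Filter.Eventually.of_forall (fun _ => le_top)
    obtain ⟨k, hk⟩ := ENNReal.exists_inv_nat_lt
      (a := δ/2) (ENNReal.div_pos hδ.ne' (by norm_num)).ne'
    have hk' : (((k:ℝ≥0∞))+1)⁻¹ < δ/2 :=
      lt_of_le_of_lt (ENNReal.inv_le_inv.2 le_self_add) hk
    have hGle : ∀ ζ ∈ K, Gfun g (N k) ζ ≤ (((k:ℝ≥0∞))+1)⁻¹ := by
      intro ζ hζK
      have h1 : ζ ∉ A := (hKsub hζK).2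
      have h2 : ζ ∉ B k (N k) := fun hc => h1 (Set.mem_iUnion.2 ⟨k, hc⟩)
      exact not_lt.1 h2
    have hev : Set.Ioo (0:ℝ) ((2:ℝ)⁻¹^(N k)/2) ∈ nhdsWithin (0:ℝ) (Set.Ioi 0) :=
      Ioo_mem_nhdsGT_of_mem ⟨le_rfl, by positivity⟩
    filter_upwards [hev] with h hmem
    obtain ⟨hh0, hh1⟩ := hmem
    obtain ⟨q, hq1, hq2⟩ := exists_rat_btwn (show h < 2*h by linarith)
    have hq0 : (0:ℝ) < q := lt_trans hh0 hq1
    have hqle : (q:ℝ) ≤ (2:ℝ)⁻¹^(N k) := by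
      have : 2*h < (2:ℝ)⁻¹^(N k) := by linarith
      linarith
    have hh0' : ENNReal.ofReal h ≠ 0 := (ENNReal.ofReal_pos.2 hh0).ne'
    have hht : ENNReal.ofReal h ≠ ⊤ := ENNReal.ofReal_ne_top
    rw [ENNReal.iSup_div]
    apply iSup_le
    intro ζ
    rw [ENNReal.iSup_div]
    apply iSup_le
    intro hζK
    have hmono : muG g (carlesonWindow ζ h) ≤ muG g (carlesonWindow ζ (q:ℝ)) :=
      measure_mono (carlesonWindow_mono hq1.le)
    have hGb : muG g (carlesonWindow ζ (q:ℝ)) / ENNReal.ofReal (q:ℝ) ≤ (((k:ℝ≥0∞))+1)⁻¹ :=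
      le_trans (le_iSup₂_of_le q ⟨hq0, hqle⟩ le_rfl) (hGle ζ hζK)
    have hq0' : ENNReal.ofReal (q:ℝ) ≠ 0 := (ENNReal.ofReal_pos.2 hq0).ne'
    have hqt : ENNReal.ofReal (q:ℝ) ≠ ⊤ := ENNReal.ofReal_ne_top
    have hstep : muG g (carlesonWindow ζ (q:ℝ)) ≤ (((k:ℝ≥0∞))+1)⁻¹ * ENNReal.ofReal (q:ℝ) :=
      (ENNReal.div_le_iff_le_mul (Or.inl hq0') (Or.inl hqt)).1 hGb
    have hq2' : ENNReal.ofReal (q:ℝ) ≤ 2 * ENNReal.ofReal h := by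
      rw [show (2:ℝ≥0∞) = ENNReal.ofReal 2 by simp,
        ← ENNReal.ofReal_mul (by norm_num)]
      exact ENNReal.ofReal_le_ofReal hq2.le
    calc muG g (carlesonWindow ζ h) / ENNReal.ofReal h
        ≤ ((((k:ℝ≥0∞))+1)⁻¹ * (2 * ENNReal.ofReal h)) / ENNReal.ofReal h := by
          apply ENNReal.div_le_div_right
          exact le_trans hmono (le_trans hstep (mul_le_mul_right hq2' _))
      _ = (((k:ℝ≥0∞))+1)⁻¹ * 2 := by
          rw [← mul_assoc, mul_div_assoc, ENNReal.div_self hh0' hht, mul_one]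
      _ ≤ δ := by
          calc (((k:ℝ≥0∞))+1)⁻¹ * 2 ≤ δ/2*2 := mul_le_mul_left hk'.le _
            _ = δ := ENNReal.div_mul_cancel (by norm_num) (by norm_num)
end

section
/- Let g be an analytic function on the unit disc 𝔻 and let K ⊂ 𝕋 be a nonempty compact set such that lim_{h→0⁺} sup_{ξ∈K} μ_g(W(ξ,h))/h = 0. Set Ω = ⋃_{ζ∈K} S(ζ). Then the restricted measure χ_Ω dμ_g is a vanishing Carleson measure: lim_{h→0⁺} sup_{ζ∈𝕋} μ_g(W(ζ,h) ∩ Ω)/h = 0. -/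
open MeasureTheory Set Metric Complex Filter Topology ENNReal NNReal

lemma chord_arg {w : ℂ} (hw : ‖w‖ = 1) :
    |Complex.arg w| ≤ (Real.pi / 2) * ‖w - 1‖ := by
  have hw0 : w ≠ 0 := by rintro rfl; simp at hw
  set θ := Complex.arg w with hθ
  have hre : w.re = Real.cos θ := by
    rw [hθ, Complex.cos_arg hw0, hw, div_one]
  have him : w.im = Real.sin θ := by
    rw [hθ, Complex.sin_arg, hw, div_one]
  have hsq : ‖w - 1‖ ^ 2 = 2 - 2 * Real.cos θ := by
    rw [Complex.sq_norm, Complex.normSq_apply, Complex.sub_re, Complex.sub_im,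
      Complex.one_re, Complex.one_im, hre, him]
    nlinarith [Real.sin_sq_add_cos_sq θ]
  have hhalf : Real.cos θ = 1 - 2 * Real.sin (θ/2) ^ 2 := by
    have h1 := Real.cos_two_mul (θ/2)
    have h2 : 2 * (θ/2) = θ := by ring
    rw [h2] at h1
    nlinarith [Real.sin_sq_add_cos_sq (θ/2)]
  have hlow : 2 * |Real.sin (θ/2)| ≤ ‖w - 1‖ := by
    nlinarith [norm_nonneg (w - 1), abs_nonneg (Real.sin (θ/2)),
      _root_.sq_abs (Real.sin (θ/2))]
  have hθpi : |θ| ≤ Real.pi := Complex.abs_arg_le_pi w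
  have hpi := Real.pi_pos
  have hj : 2 / Real.pi * |θ/2| ≤ Real.sin |θ/2| :=
    Real.mul_le_sin (abs_nonneg _) (by rw [abs_div, _root_.abs_two]; linarith)
  have hsin : Real.sin |θ/2| ≤ |Real.sin (θ/2)| := by
    rcases abs_choice (θ/2) with h | h
    · rw [h]; exact le_abs_self _
    · rw [h, Real.sin_neg]; exact neg_le_abs _
  have this1 : 2 / Real.pi * |θ/2| ≤ |Real.sin (θ/2)| := hj.trans hsin
  have h4 : 2 / Real.pi * |θ/2| = |θ| / Real.pi := by
    rw [abs_div, _root_.abs_two]; field_simp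
  rw [h4] at this1
  have hfin : |θ| ≤ Real.pi * |Real.sin (θ/2)| := by
    have := (div_le_iff₀ hpi).mp this1
    linarith [this, mul_comm (|Real.sin (θ/2)|) Real.pi]
  calc |θ| ≤ Real.pi * |Real.sin (θ/2)| := hfin
    _ ≤ (Real.pi / 2) * ‖w - 1‖ := by nlinarith

lemma arg_div_triangle {a b c : ℂ} (ha : a ≠ 0) (hb : b ≠ 0) (hc : c ≠ 0)
    (hlt : |Complex.arg (a/b)| + |Complex.arg (b/c)| < Real.pi) :
    |Complex.arg (a/c)| ≤ |Complex.arg (a/b)| + |Complex.arg (b/c)| := by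
  have hab : a/b ≠ 0 := div_ne_zero ha hb
  have hbc : b/c ≠ 0 := div_ne_zero hb hc
  have hmul : a / c = a/b * (b/c) := by field_simp
  have habs : |Complex.arg (a/b) + Complex.arg (b/c)| < Real.pi :=
    lt_of_le_of_lt (abs_add_le _ _) hlt
  have hmem : Complex.arg (a/b) + Complex.arg (b/c) ∈ Set.Ioc (-Real.pi) Real.pi :=
    ⟨(abs_lt.1 habs).1, ((abs_lt.1 habs).2).le⟩
  rw [hmul, Complex.arg_mul hab hbc hmem]
  exact abs_add_le _ _

lemma stolz_close {ξ z : ℂ} (hξ : ‖ξ‖ = 1)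
    (hz : z ∈ interior (convexHull ℝ (Metric.ball (0:ℂ) (1/2) ∪ {ξ}))) :
    ‖z - ξ‖ ≤ 3 * (1 - ‖z‖) := by
  have h1 : z ∈ convexHull ℝ (Metric.ball (0:ℂ) (1/2) ∪ {ξ}) := interior_subset hz
  rw [Set.union_singleton, convexHull_insert (Metric.nonempty_ball.2 (by norm_num)),
    (convex_ball (0:ℂ) (1/2)).convexHull_eq, mem_convexJoin] at h1
  obtain ⟨x, hx, b, hb, hseg⟩ := h1
  rw [Set.mem_singleton_iff] at hx
  rw [hx] at hseg
  obtain ⟨t1, t2, ht1, ht2, hsum, hz'⟩ := hseg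
  rw [mem_ball_zero_iff] at hb
  have ht1' : t1 = 1 - t2 := by linarith
  subst ht1'
  have e1 : z - ξ = t2 • (b - ξ) := by
    rw [← hz']; module
  have e2 : ‖z - ξ‖ = t2 * ‖b - ξ‖ := by
    rw [e1, norm_smul, Real.norm_eq_abs, _root_.abs_of_nonneg ht2]
  have e3 : ‖b - ξ‖ ≤ 3/2 := by
    calc ‖b - ξ‖ ≤ ‖b‖ + ‖ξ‖ := norm_sub_le b ξ
      _ ≤ 3/2 := by rw [hξ]; linarith [hb.le]
  have e4 : ‖z‖ ≤ (1 - t2) + t2 * ‖b‖ := by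
    calc ‖z‖ = ‖(1-t2) • ξ + t2 • b‖ := by rw [hz']
      _ ≤ ‖(1-t2) • ξ‖ + ‖t2 • b‖ := norm_add_le _ _
      _ = (1 - t2) * 1 + t2 * ‖b‖ := by
          rw [norm_smul, norm_smul, Real.norm_eq_abs, Real.norm_eq_abs,
            _root_.abs_of_nonneg ht1, _root_.abs_of_nonneg ht2, hξ]
      _ = (1 - t2) + t2 * ‖b‖ := by ring
  have hbn : ‖b‖ < 1/2 := by exact hb
  nlinarith [mul_le_mul_of_nonneg_left e3 ht2, mul_le_mul_of_nonneg_left hbn.le ht2]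

lemma arg_nine {ξ z : ℂ} (hξ : ‖ξ‖ = 1) {h : ℝ} (h0 : 0 < h) (h4 : h < 1/4)
    (hz1 : 1 - h < ‖z‖) (hz2 : ‖z‖ < 1)
    (hzS : ‖z - ξ‖ ≤ 3 * (1 - ‖z‖)) :
    |Complex.arg (z / ξ)| < 9 * h := by
  set r : ℝ := ‖z‖ with hr
  have hr0 : (0:ℝ) < r := by simp only [hr]; linarith
  have hrC : (r:ℂ) ≠ 0 := by exact_mod_cast hr0.ne'
  have hξ0 : ξ ≠ 0 := by rintro rfl; simp at hξ
  have hz0 : z ≠ 0 := by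
    rintro rfl; simp only [hr, norm_zero] at hr0; linarith
  set w : ℂ := z / ((r:ℂ) * ξ) with hw
  have hweq : w = ((1/r : ℝ) : ℂ) * (z / ξ) := by
    rw [hw]; push_cast; field_simp
  have harg : Complex.arg w = Complex.arg (z / ξ) := by
    rw [hweq, Complex.arg_real_mul _ (by positivity : (0:ℝ) < 1/r)]
  have habsw : ‖w‖ = 1 := by
    rw [hw, norm_div, norm_mul, Complex.norm_real, Real.norm_eq_abs, _root_.abs_of_pos hr0, hξ, mul_one]
    exact div_self hr0.ne'
  have hsub : w - 1 = (z - (r:ℂ) * ξ) / ((r:ℂ) * ξ) := by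
    rw [hw]; field_simp
  have habs1 : ‖w - 1‖ = ‖z - (r:ℂ) * ξ‖ / r := by
    rw [hsub, norm_div, norm_mul, Complex.norm_real, Real.norm_eq_abs, _root_.abs_of_pos hr0, hξ, mul_one]
  have hsplit : z - (r:ℂ) * ξ = (z - ξ) + (1 - (r:ℂ)) * ξ := by ring
  have habs2 : ‖(1 - (r:ℂ)) * ξ‖ = 1 - r := by
    rw [norm_mul, hξ, mul_one, show (1 - (r:ℂ)) = ((1 - r : ℝ) : ℂ) by push_cast; ring,
      Complex.norm_real, Real.norm_eq_abs, _root_.abs_of_nonneg (by linarith)]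
  have habs3 : ‖z - (r:ℂ) * ξ‖ ≤ 4 * (1 - r) := by
    rw [hsplit]
    calc ‖(z - ξ) + (1 - (r:ℂ)) * ξ‖
        ≤ ‖z - ξ‖ + ‖(1 - (r:ℂ)) * ξ‖ := by
          exact norm_add_le (z - ξ) ((1 - (r:ℂ)) * ξ)
      _ ≤ 3 * (1 - r) + (1 - r) := by rw [habs2]; exact add_le_add hzS le_rfl
      _ = 4 * (1 - r) := by ring
  have hchord := chord_arg habsw
  rw [harg] at hchord
  have hDnn : 0 ≤ ‖w - 1‖ := norm_nonneg _
  have hD : ‖w - 1‖ * r ≤ 4 * (1 - r) := by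
    rw [habs1, div_mul_cancel₀ _ hr0.ne']
    exact habs3
  have hr34 : (3:ℝ)/4 < r := by linarith
  have hDlt : ‖w - 1‖ ≤ 16/3 * h := by
    nlinarith
  have hpi315 := Real.pi_lt_d2
  have hpipos := Real.pi_pos
  calc |Complex.arg (z / ξ)| ≤ Real.pi / 2 * ‖w - 1‖ := hchord
    _ < 9 * h := by nlinarith


lemma window_subset_aux {ζ ξ₀ : ℂ} {h : ℝ} (hζ : ‖ζ‖ = 1) (hξ₀ : ‖ξ₀‖ = 1)
    (h0 : 0 < h) (h4 : h < 1/4) {z : ℂ}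
    (hzW : z ∈ carlesonWindow ζ h) (hzS : z ∈ stolzDomain ξ₀) :
    carlesonWindow ζ h ⊆ carlesonWindow ξ₀ (12 * h) := by
  have hζ0 : ζ ≠ 0 := by rintro rfl; simp at hζ
  have hξ00 : ξ₀ ≠ 0 := by rintro rfl; simp at hξ₀
  obtain ⟨hz1, hz2, hz3⟩ := hzW
  have hz0 : z ≠ 0 := by rintro rfl; rw [norm_zero] at hz1; linarith
  have h9 : |Complex.arg (z / ξ₀)| < 9 * h :=
    arg_nine hξ₀ h0 h4 hz1 hz2 (stolz_close hξ₀ hzS)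
  have hinv : |Complex.arg (ξ₀ / z)| < 9 * h := by
    rw [show ξ₀ / z = (z / ξ₀)⁻¹ from (inv_div z ξ₀).symm, Complex.abs_arg_inv]
    exact h9
  have hpi := Real.pi_gt_three
  have h10 : |Complex.arg (ξ₀ / ζ)| < 10 * h := by
    have := arg_div_triangle hξ00 hz0 hζ0
      (by linarith : |Complex.arg (ξ₀/z)| + |Complex.arg (z/ζ)| < Real.pi)
    linarith
  have h10' : |Complex.arg (ζ / ξ₀)| < 10 * h := by
    rw [show ζ / ξ₀ = (ξ₀ / ζ)⁻¹ from (inv_div ξ₀ ζ).symm, Complex.abs_arg_inv]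
    exact h10
  intro z' hz'
  obtain ⟨hz'1, hz'2, hz'3⟩ := hz'
  have hz'0 : z' ≠ 0 := by rintro rfl; rw [norm_zero] at hz'1; linarith
  refine ⟨by linarith, hz'2, ?_⟩
  have := arg_div_triangle hz'0 hζ0 hξ00
    (by linarith : |Complex.arg (z'/ζ)| + |Complex.arg (ζ/ξ₀)| < Real.pi)
  linarith

/-- if `sup_{ξ∈K} μ_g(W(ξ,h)) = o(h)` for a nonempty compact `K ⊆ 𝕋` and
`Ω = ⋃_{ζ∈K} S(ζ)`, then `χ_Ω dμ_g` is a vanishing Carleson measure. -/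
theorem restricted_muG_vanishing_carleson
    (g : ℂ → ℂ) (hg : DifferentiableOn ℂ g (Metric.ball (0:ℂ) 1))
    (K : Set ℂ) (hK : K ⊆ Metric.sphere (0:ℂ) 1) (hKc : IsCompact K) (hKne : K.Nonempty)
    (hvan : Filter.Tendsto
      (fun h : ℝ => (⨆ ξ ∈ K, muG g (carlesonWindow ξ h)) / ENNReal.ofReal h)
      (nhdsWithin 0 (Set.Ioi 0)) (nhds 0)) :
    Filter.Tendsto
      (fun h : ℝ => (⨆ ζ ∈ Metric.sphere (0:ℂ) 1,
          muG g (carlesonWindow ζ h ∩ ⋃ ξ ∈ K, stolzDomain ξ)) / ENNReal.ofReal h)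
      (nhdsWithin 0 (Set.Ioi 0)) (nhds 0) := by
  set S : ℝ → ℝ≥0∞ := fun t => ⨆ ξ ∈ K, muG g (carlesonWindow ξ t) with hS
  have key : ∀ h ∈ Set.Ioo (0:ℝ) (1/4),
      (⨆ ζ ∈ Metric.sphere (0:ℂ) 1,
        muG g (carlesonWindow ζ h ∩ ⋃ ξ ∈ K, stolzDomain ξ)) / ENNReal.ofReal h
        ≤ 12 * (S (12*h) / ENNReal.ofReal (12*h)) := by
    rintro h ⟨h0, h4⟩
    have hb : (⨆ ζ ∈ Metric.sphere (0:ℂ) 1,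
        muG g (carlesonWindow ζ h ∩ ⋃ ξ ∈ K, stolzDomain ξ)) ≤ S (12*h) := by
      refine iSup₂_le fun ζ hζ => ?_
      rcases Set.eq_empty_or_nonempty
        (carlesonWindow ζ h ∩ ⋃ ξ ∈ K, stolzDomain ξ) with he | hne
      · rw [he, measure_empty]; exact zero_le
      · obtain ⟨z, hzW, hzΩ⟩ := hne
        obtain ⟨ξ₀, hξ₀K, hzS⟩ := Set.mem_iUnion₂.mp hzΩ
        have hζ1 : ‖ζ‖ = 1 := by
          exact mem_sphere_zero_iff_norm.mp hζ
        have hξ₀1 : ‖ξ₀‖ = 1 := by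
          exact mem_sphere_zero_iff_norm.mp (hK hξ₀K)
        have hsub := window_subset_aux hζ1 hξ₀1 h0 h4 hzW hzS
        refine le_trans (measure_mono (Set.inter_subset_left.trans hsub)) ?_
        simp only [hS]
        exact le_iSup₂_of_le ξ₀ hξ₀K le_rfl
    calc (⨆ ζ ∈ Metric.sphere (0:ℂ) 1,
        muG g (carlesonWindow ζ h ∩ ⋃ ξ ∈ K, stolzDomain ξ)) / ENNReal.ofReal h
        ≤ S (12*h) / ENNReal.ofReal h := ENNReal.div_le_div_right hb _
      _ = 12 * (S (12*h) / ENNReal.ofReal (12*h)) := by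
          have h12 : ENNReal.ofReal (12*h) = 12 * ENNReal.ofReal h := by
            rw [ENNReal.ofReal_mul (by norm_num : (0:ℝ) ≤ 12)]
            norm_num
          rw [h12, ← mul_div_assoc,
            ENNReal.mul_div_mul_left _ _ (by norm_num) (by norm_num)]
  have hmap : Filter.Tendsto (fun t : ℝ => 12 * t)
      (nhdsWithin 0 (Set.Ioi 0)) (nhdsWithin 0 (Set.Ioi 0)) := by
    apply tendsto_nhdsWithin_of_tendsto_nhds_of_eventually_within
    · have h1 : Filter.Tendsto (fun t : ℝ => 12 * t) (nhds 0) (nhds (12 * 0)) :=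
        (continuous_const.mul continuous_id).tendsto 0
      simpa using h1.mono_left nhdsWithin_le_nhds
    · filter_upwards [self_mem_nhdsWithin] with t ht
      exact mul_pos (by norm_num : (0:ℝ) < 12) ht
  have hcomp := hvan.comp hmap
  have hup : Filter.Tendsto (fun t : ℝ => 12 * (S (12*t) / ENNReal.ofReal (12*t)))
      (nhdsWithin 0 (Set.Ioi 0)) (nhds 0) := by
    have h2 := ENNReal.Tendsto.const_mul (a := 12) hcomp (Or.inr (by norm_num))
    simpa [Function.comp] using h2
  refine tendsto_of_tendsto_of_tendsto_of_le_of_le' tendsto_const_nhds hup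
    (Filter.Eventually.of_forall fun t => zero_le) ?_
  filter_upwards [Ioo_mem_nhdsGT_of_mem (Set.left_mem_Ico.mpr (by norm_num : (0:ℝ) < 1/4))]
    with t ht
  exact key t ht
end

section
/- Let K ⊂ 𝕋 be a nonempty compact set and set Ω = ⋃_{ζ∈K} S(ζ). Let ζ ∈ 𝕋 and 0 < h < 1/4, and suppose W(ζ,h) ∩ Ω ≠ ∅. Let ξ be a point of K at minimal angular distance from ζ (ξ = ζ if ζ ∈ K). Then |arg(ξ/ζ)| < 2h, and consequently W(ζ,h) ⊆ W(ξ,3h). -/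
set_option maxHeartbeats 1000000


open MeasureTheory Set Metric Complex Filter Topology ENNReal NNReal

lemma aux2 (h X : ℝ) (hh0 : 0 < h) (hh : h < 1/4) (hX : 1/4 < X) (hX1 : X ≤ 1)
    (h2 : 3*(h*X)^2 ≤ (1-X)^2) (h4 : (1-h)^2 < X^2 + (1-X)^2/3) : False := by
  have h3 : 17/10*(h*X) ≤ 1-X := by
    have ha0 : 0 ≤ 17/10*(h*X) := by positivity
    have ht0 : (0:ℝ) ≤ 1-X := by linarith
    have hsq : (17/10*(h*X))^2 ≤ (1-X)^2 := by nlinarith [sq_nonneg (h*X)]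
    exact (pow_le_pow_iff_left₀ ha0 ht0 two_ne_zero).mp hsq
  have hg1' : 0 ≤ (1-X)*(1+17/10*h) - 17/10*h := by nlinarith [h3]
  have hB : 0 ≤ 2 + 17/15*h - 4/3*((1+17/10*h)*(1-X)) := by
    have hm : (1+17/10*h)*(1-X) ≤ (1+17/10*(1/4))*(3/4) :=
      mul_le_mul (by linarith) (by linarith) (by linarith) (by linarith)
    linarith
  have hprod := mul_nonneg hg1' hB
  have hP : 0 < (1+17/10*h)^2 * (X^2 + (1-X)^2/3 - (1-h)^2) :=
    mul_pos (by positivity) (by linarith)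
  nlinarith [hprod, hP, mul_nonneg hh0.le (by linarith : (0:ℝ) ≤ 1/4 - h),
    mul_nonneg (mul_nonneg hh0.le hh0.le) (by linarith : (0:ℝ) ≤ 1/4 - h),
    sq_nonneg (h*h), hh0]

lemma real_key (h q x y : ℝ) (hh0 : 0 < h) (hh : h < 1/4) (hq0 : 0 ≤ q) (hq1 : q ≤ 1)
    (hw : x^2 + y^2 ≤ 1/4)
    (hu : (1-h)^2 < (1 - q*(1-x))^2 + q^2*y^2) :
    0 < 1 - q*(1-x) ∧ q * |y| < h * (1 - q*(1-x)) := by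
  have hx2 : x ≤ 1/2 := by nlinarith [sq_nonneg y, sq_nonneg (x - 1/2)]
  have hxm : -(1/2) ≤ x := by nlinarith [sq_nonneg y, sq_nonneg (x + 1/2)]
  have hub : (1 - q*(1-x))^2 + q^2*y^2 ≤ (1 - q/2)^2 := by
    nlinarith [mul_nonneg (mul_nonneg hq0 (by linarith : (0:ℝ) ≤ 1 - q)) (by linarith : (0:ℝ) ≤ 1 - 2*x),
      mul_nonneg (mul_nonneg hq0 hq0) (by linarith : (0:ℝ) ≤ 1/4 - x^2 - y^2)]
  have hq2h : q < 2*h := by nlinarith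
  have hX : 1/4 < 1 - q*(1-x) := by nlinarith
  refine ⟨by linarith, ?_⟩
  by_contra hc
  push_neg at hc
  have hqx : 1 - (1 - q*(1-x)) = q*(1-x) := by ring
  have hX1 : 1 - q*(1-x) ≤ 1 := by nlinarith [mul_nonneg hq0 (by linarith : (0:ℝ) ≤ 1-x)]
  have hy2 : y^2 ≤ (1-x)^2/3 := by nlinarith [sq_nonneg (2*x - 1/2)]
  have h1 : h^2 * (1 - q*(1-x))^2 ≤ q^2 * y^2 := by
    have h5 : (h*(1 - q*(1-x)))^2 ≤ (q*|y|)^2 := by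
      apply pow_le_pow_left₀ (by positivity) hc 2
    calc h^2*(1 - q*(1-x))^2 = (h*(1 - q*(1-x)))^2 := by ring
      _ ≤ (q*|y|)^2 := h5
      _ = q^2*y^2 := by rw [mul_pow, _root_.sq_abs]
  have hY : q^2*y^2 ≤ (1-(1 - q*(1-x)))^2/3 := by
    calc q^2*y^2 ≤ q^2*((1-x)^2/3) := mul_le_mul_of_nonneg_left hy2 (sq_nonneg q)
      _ = (q*(1-x))^2/3 := by ring
      _ = (1-(1 - q*(1-x)))^2/3 := by rw [hqx]
  have h2 : 3*(h*(1 - q*(1-x)))^2 ≤ (1-(1 - q*(1-x)))^2 := by nlinarith [h1, hY]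
  have h4 : (1-h)^2 < (1 - q*(1-x))^2 + (1-(1 - q*(1-x)))^2/3 := by nlinarith [h1, hu, hY]
  exact aux2 h (1 - q*(1-x)) hh0 hh hX hX1 h2 h4

lemma abs_arg_mul_le {a b : ℂ} (ha : a ≠ 0) (hb : b ≠ 0)
    (hs : |Complex.arg a| + |Complex.arg b| < Real.pi) :
    |Complex.arg (a*b)| ≤ |Complex.arg a| + |Complex.arg b| := by
  have habs : |Complex.arg a + Complex.arg b| < Real.pi :=
    lt_of_le_of_lt (abs_add_le _ _) hs
  have hmem : Complex.arg a + Complex.arg b ∈ Set.Ioc (-Real.pi) Real.pi :=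
    ⟨(abs_lt.1 habs).1, (abs_lt.1 habs).2.le⟩
  rw [Complex.arg_mul ha hb hmem]
  exact abs_add_le _ _

lemma stolz_arg {ξ' z : ℂ} (hξ : ‖ξ'‖ = 1) (hz : z ∈ stolzDomain ξ')
    {h : ℝ} (hh0 : 0 < h) (hh : h < 1/4) (hr : 1 - h < ‖z‖) :
    |Complex.arg (z / ξ')| < h := by
  have hz' : z ∈ convexHull ℝ (Metric.ball (0:ℂ) (1/2) ∪ {ξ'}) := interior_subset hz
  rw [Set.union_singleton,
    convexHull_insert (Metric.nonempty_ball.2 (by norm_num)),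
    (convex_ball (0:ℂ) (1/2)).convexHull_eq] at hz'
  rw [mem_convexJoin] at hz'
  obtain ⟨ξ'', hξ'', w, hw, hseg⟩ := hz'
  rw [Set.mem_singleton_iff] at hξ''
  rw [hξ''] at hseg
  obtain ⟨p, q, hp, hq, hpq, hz2⟩ := hseg
  have hwabs : ‖w‖ < 1/2 := by
    simpa using mem_ball_zero_iff.1 hw
  set c := w * (starRingEnd ℂ) ξ' with hcdef
  have hmul : ξ' * (starRingEnd ℂ) ξ' = 1 := by
    rw [Complex.mul_conj]
    norm_cast
    rw [Complex.normSq_eq_norm_sq, hξ]; norm_num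
  have hdiv : z / ξ' = z * (starRingEnd ℂ) ξ' := by
    rw [div_eq_mul_inv, inv_eq_of_mul_eq_one_right hmul]
  have hu : z * (starRingEnd ℂ) ξ' = (p:ℂ) + (q:ℂ) * c := by
    rw [← hz2]
    calc (p • ξ' + q • w) * (starRingEnd ℂ) ξ'
        = (p:ℂ)*(ξ' * (starRingEnd ℂ) ξ') + (q:ℂ)*(w * (starRingEnd ℂ) ξ') := by
          simp only [Complex.real_smul]; ring
      _ = (p:ℂ) + (q:ℂ)*c := by rw [hmul, hcdef]; ring
  set x := c.re
  set y := c.im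
  have hre : (z/ξ').re = p + q*x := by rw [hdiv, hu]; simp [x]
  have him : (z/ξ').im = q*y := by rw [hdiv, hu]; simp [y]
  have habs : ‖z/ξ'‖ = ‖z‖ := by
    rw [hdiv, norm_mul, Complex.norm_conj, hξ, mul_one]
  have hcabs : x^2 + y^2 ≤ 1/4 := by
    have h1 : ‖c‖ < 1/2 := by
      rw [hcdef, norm_mul, Complex.norm_conj, hξ, mul_one]; exact hwabs
    have h2 : x^2 + y^2 = ‖c‖ ^ 2 := by
      rw [Complex.sq_norm, Complex.normSq_apply]; ring
    nlinarith [norm_nonneg c]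
  have hp' : p = 1 - q := by linarith
  have hmain : (1-h)^2 < (1 - q*(1-x))^2 + q^2*y^2 := by
    have h1 : (1-h)^2 < ‖z/ξ'‖ ^2 := by
      have : (0:ℝ) ≤ 1 - h := by linarith
      rw [habs]; nlinarith [norm_nonneg z]
    have h2 : ‖z/ξ'‖^2 = (p + q*x)^2 + (q*y)^2 := by
      rw [Complex.sq_norm, Complex.normSq_apply, hre, him]; ring
    rw [h2, hp'] at h1
    calc (1-h)^2 < (1 - q + q*x)^2 + (q*y)^2 := h1
      _ = (1 - q*(1-x))^2 + q^2*y^2 := by ring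
  obtain ⟨hXpos, hkey⟩ := real_key h q x y hh0 hh hq (by linarith) hcabs hmain
  have hupos : 0 < (z/ξ').re := by rw [hre, hp']; calc (0:ℝ) < 1 - q*(1-x) := hXpos
                                                       _ = 1 - q + q*x := by ring
  have harg2 : |Complex.arg (z/ξ')| < Real.pi/2 :=
    Complex.abs_arg_lt_pi_div_two_iff.2 (Or.inl hupos)
  by_contra hcon
  push_neg at hcon
  have h5 : Real.tan h ≤ Real.tan |Complex.arg (z/ξ')| := by
    rcases eq_or_lt_of_le hcon with he | hlt
    · rw [he]
    · exact (Real.tan_lt_tan_of_lt_of_lt_pi_div_two (by linarith [Real.pi_gt_three]) harg2 hlt).le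
  have h6 : Real.tan |Complex.arg (z/ξ')| ≤ |(z/ξ').im| / (z/ξ').re := by
    have ht : Real.tan (Complex.arg (z/ξ')) = (z/ξ').im / (z/ξ').re := Complex.tan_arg _
    rcases abs_cases (Complex.arg (z/ξ')) with ⟨he, _⟩ | ⟨he, _⟩ <;> rw [he]
    · rw [ht]
      calc (z/ξ').im / (z/ξ').re ≤ |(z/ξ').im / (z/ξ').re| := le_abs_self _
        _ = |(z/ξ').im| / (z/ξ').re := by rw [abs_div, abs_of_pos hupos]
    · rw [Real.tan_neg, ht]
      calc -((z/ξ').im / (z/ξ').re) ≤ |(z/ξ').im / (z/ξ').re| := neg_le_abs _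
        _ = |(z/ξ').im| / (z/ξ').re := by rw [abs_div, abs_of_pos hupos]
  have h7 : |(z/ξ').im| / (z/ξ').re < h := by
    rw [div_lt_iff₀ hupos]
    rw [him, abs_mul, _root_.abs_of_nonneg hq]
    calc q * |y| < h * (1 - q*(1-x)) := hkey
      _ = h * (z/ξ').re := by rw [hre, hp']; ring
  have h8 : h ≤ Real.tan h := Real.le_tan hh0.le (by linarith [Real.pi_gt_three])
  linarith

/-- geometric window inclusion. If `W(ζ,h)` meets `Ω = ⋃_{ζ∈K} S(ζ)` for
`0 < h < 1/4` and `ξ ∈ K` has minimal angular distance to `ζ`, then `|arg(ξ/ζ)| < 2h`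
and `W(ζ,h) ⊆ W(ξ,3h)`. -/
theorem carleson_window_inclusion
    (K : Set ℂ) (hK : K ⊆ Metric.sphere (0:ℂ) 1) (hKc : IsCompact K) (hKne : K.Nonempty)
    (ζ : ℂ) (hζ : ζ ∈ Metric.sphere (0:ℂ) 1)
    (h : ℝ) (hh0 : 0 < h) (hh : h < 1/4)
    (hmeet : (carlesonWindow ζ h ∩ ⋃ ξ ∈ K, stolzDomain ξ).Nonempty)
    (ξ : ℂ) (hξK : ξ ∈ K)
    (hmin : ∀ ξ' ∈ K, |Complex.arg (ξ / ζ)| ≤ |Complex.arg (ξ' / ζ)|) :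
    |Complex.arg (ξ / ζ)| < 2 * h ∧ carlesonWindow ζ h ⊆ carlesonWindow ξ (3 * h) := by
  obtain ⟨z, hzW, hzU⟩ := hmeet
  rw [Set.mem_iUnion₂] at hzU
  obtain ⟨ξ', hξ'K, hzS⟩ := hzU
  have habs1 : ∀ u ∈ Metric.sphere (0:ℂ) 1, ‖u‖ = 1 := fun u hu => by
    simpa using mem_sphere_zero_iff_norm.1 hu
  have hζ1 := habs1 ζ hζ
  have hξ'1 := habs1 ξ' (hK hξ'K)
  have hξ1 := habs1 ξ (hK hξK)
  have hζ0 : ζ ≠ 0 := fun e => by simp [e] at hζ1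
  have hξ0 : ξ ≠ 0 := fun e => by simp [e] at hξ1
  have hξ'0 : ξ' ≠ 0 := fun e => by simp [e] at hξ'1
  simp only [carlesonWindow, Set.mem_setOf_eq] at hzW
  obtain ⟨hz1, hz2, hz3⟩ := hzW
  have hz0 : z ≠ 0 := by
    intro e; rw [e] at hz1; simp at hz1; linarith
  have hpi : (3:ℝ) < Real.pi := Real.pi_gt_three
  have hA : |Complex.arg (z/ξ')| < h := stolz_arg hξ'1 hzS hh0 hh hz1
  have e2 : |Complex.arg (ξ'/z)| = |Complex.arg (z/ξ')| := by
    rw [← inv_div, Complex.abs_arg_inv]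
  have hp1 : |Complex.arg (ξ'/ζ)| < 2*h := by
    have e1 : ξ'/ζ = (ξ'/z) * (z/ζ) := by
      field_simp
    have ht := abs_arg_mul_le (div_ne_zero hξ'0 hz0) (div_ne_zero hz0 hζ0)
      (by rw [e2]; linarith)
    rw [e1]
    calc |Complex.arg ((ξ'/z)*(z/ζ))| ≤ |Complex.arg (ξ'/z)| + |Complex.arg (z/ζ)| := ht
      _ < 2*h := by rw [e2]; linarith
  have hm : |Complex.arg (ξ/ζ)| < 2*h := lt_of_le_of_lt (hmin ξ' hξ'K) hp1
  refine ⟨hm, ?_⟩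
  intro z' hz'W
  simp only [carlesonWindow, Set.mem_setOf_eq] at hz'W ⊢
  obtain ⟨g1, g2, g3⟩ := hz'W
  have hz'0 : z' ≠ 0 := by
    intro e; rw [e] at g1; simp at g1; linarith
  refine ⟨by linarith, g2, ?_⟩
  have e1 : z'/ξ = (z'/ζ) * (ζ/ξ) := by
    field_simp
  have e3 : |Complex.arg (ζ/ξ)| = |Complex.arg (ξ/ζ)| := by
    rw [← inv_div, Complex.abs_arg_inv]
  have ht := abs_arg_mul_le (div_ne_zero hz'0 hζ0) (div_ne_zero hζ0 hξ0)
    (by rw [e3]; linarith)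
  rw [e1]
  calc |Complex.arg ((z'/ζ)*(ζ/ξ))| ≤ |Complex.arg (z'/ζ)| + |Complex.arg (ζ/ξ)| := ht
    _ < 3*h := by rw [e3]; linarith
end

section
/- Let 1 < p < ∞ and let (f_n) be a sequence of analytic functions on the unit disc 𝔻 with sup_n ‖f_n‖_{H^p} < ∞ and f_n → 0 uniformly on every compact subset of 𝔻. Then for every ε > 0, sup { ∫_0^1 |f_n(te^{iθ})| / |1 − te^{iθ}| dt : θ ∈ [−π,π], |e^{iθ} − 1| ≥ ε } → 0 as n → ∞; in particular the Cesàro means Cf_n(e^{iθ}) = ∫_0^1 f_n(te^{iθ})/(1 − te^{iθ}) dt converge to 0 uniformly on 𝕋 ∖ {ζ : |ζ − 1| < ε}. -/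
open MeasureTheory Set Metric Complex Filter Topology ENNReal NNReal

section Helpers
open intervalIntegral

lemma ptwise (ρ : ℝ) (w z : ℂ) (hw : Complex.normSq w = ρ^2) (h : w - z ≠ 0) :
    (w / (w - z)).re = 1/2 + (ρ^2 - Complex.normSq z)/2 * (Complex.normSq (w-z))⁻¹ := by
  have h0 : Complex.normSq (w - z) ≠ 0 := by
    simpa [Complex.normSq_eq_zero] using h
  have hw' : w.re*w.re + w.im*w.im = ρ^2 := by simpa [Complex.normSq_apply] using hw
  rw [Complex.div_re, ← add_div]
  field_simp
  simp only [Complex.normSq_apply, Complex.sub_re, Complex.sub_im] at *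
  linear_combination hw'

lemma poissonInt (ρ : ℝ) (z : ℂ) (hρ : 0 < ρ) (hz : ‖z‖ < ρ) :
    ∫ θ in (0:ℝ)..(2*Real.pi), (Complex.normSq (circleMap 0 ρ θ - z))⁻¹
      = 2*Real.pi/(ρ^2 - Complex.normSq z) := by
  have habs : ∀ θ : ℝ, ‖circleMap 0 ρ θ‖ = ρ := by
    intro θ; simp [norm_circleMap_zero, abs_of_pos hρ]
  have hne : ∀ θ : ℝ, circleMap 0 ρ θ - z ≠ 0 := by
    intro θ h
    rw [sub_eq_zero] at h
    rw [← h, habs θ] at hz; exact lt_irrefl _ hz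
  have hmem : z ∈ ball (0:ℂ) ρ := by
    simpa using hz
  have h1 : (∮ w in C(0, ρ), (w - z)⁻¹) = 2 * Real.pi * I :=
    circleIntegral.integral_sub_inv_of_mem_ball hmem
  rw [circleIntegral] at h1
  simp only [deriv_circleMap, smul_eq_mul] at h1
  have h2 : ∫ θ in (0:ℝ)..(2*Real.pi), I * (circleMap 0 ρ θ / (circleMap 0 ρ θ - z))
      = 2 * Real.pi * I := by
    rw [← h1]; congr 1; ext θ; rw [div_eq_mul_inv]; ring
  rw [intervalIntegral.integral_const_mul] at h2
  have h3 : ∫ θ in (0:ℝ)..(2*Real.pi), circleMap 0 ρ θ / (circleMap 0 ρ θ - z)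
      = 2 * Real.pi := by
    refine mul_left_cancel₀ I_ne_zero (h2.trans ?_)
    ring
  have hcont : Continuous fun θ : ℝ => circleMap 0 ρ θ / (circleMap 0 ρ θ - z) :=
    (continuous_circleMap 0 ρ).div ((continuous_circleMap 0 ρ).sub continuous_const)
      (fun θ => hne θ)
  have h4 : ∫ θ in (0:ℝ)..(2*Real.pi), (circleMap 0 ρ θ / (circleMap 0 ρ θ - z)).re
      = 2 * Real.pi := by
    have := Complex.reCLM.intervalIntegral_comp_comm (hcont.intervalIntegrable (μ := volume) 0 (2*Real.pi))
    simp only [Complex.reCLM_apply] at this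
    rw [this, h3]; simp
  have h5 : ∀ θ : ℝ, (circleMap 0 ρ θ / (circleMap 0 ρ θ - z)).re
      = 1/2 + (ρ^2 - Complex.normSq z)/2 * (Complex.normSq (circleMap 0 ρ θ - z))⁻¹ := by
    intro θ
    exact ptwise ρ _ z (by rw [← Complex.sq_norm, habs θ]) (hne θ)
  rw [intervalIntegral.integral_congr (fun θ _ => h5 θ)] at h4
  have hcont2 : Continuous fun θ : ℝ => (Complex.normSq (circleMap 0 ρ θ - z))⁻¹ := by
    apply Continuous.inv₀
    · exact Complex.continuous_normSq.comp ((continuous_circleMap 0 ρ).sub continuous_const)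
    · intro θ; exact (Complex.normSq_pos.2 (hne θ)).ne'
  rw [intervalIntegral.integral_add (continuous_const.intervalIntegrable (μ := volume) 0 (2*Real.pi))
    ((hcont2.intervalIntegrable (μ := volume) _ _).const_mul _),
    intervalIntegral.integral_const_mul, intervalIntegral.integral_const] at h4
  have hc : (0:ℝ) < ρ^2 - Complex.normSq z := by
    have : Complex.normSq z < ρ^2 := by
      rw [← Complex.sq_norm]
      exact pow_lt_pow_left₀ hz (norm_nonneg z) (by norm_num)
    linarith
  have hπ := Real.pi_pos
  rw [eq_div_iff hc.ne']
  simp only [smul_eq_mul, sub_zero] at h4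
  nlinarith [h4]

lemma circle_bound (p p' : ℝ) (hp : 1 < p) (hp'0 : 0 < p') (hp'p : p' ≤ p)
    (f : ℂ → ℂ) (C : ℝ) (hf : eHpNorm p f ≤ ENNReal.ofReal C) (r : ℝ) (hr0 : 0 ≤ r) (hr1 : r < 1) :
    (∫⁻ θ in Ioc (0:ℝ) (2*Real.pi), (‖f (circleMap 0 r θ)‖₊ : ℝ≥0∞) ^ p')
      ≤ ENNReal.ofReal (2*Real.pi) * (1 + (ENNReal.ofReal C)^p) := by
  have hπ := Real.pi_pos
  set P := ENNReal.ofReal (2*Real.pi) with hP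
  have hP0 : P ≠ 0 := by simp [hP]; positivity
  have hPt : P ≠ ⊤ := ENNReal.ofReal_ne_top
  set A := ∫⁻ θ in Ioc (0:ℝ) (2*Real.pi),
    (‖f ((r:ℂ) * Complex.exp ((θ:ℂ)*Complex.I))‖₊:ℝ≥0∞) ^ p with hA
  have h1 : (A / P)^(1/p) ≤ ENNReal.ofReal C := by
    refine le_trans ?_ hf
    rw [eHpNorm]
    exact le_iSup₂ (f := fun (r : ℝ) (_ : r ∈ Set.Ico (0:ℝ) 1) =>
      ((∫⁻ θ in Set.Ioc (0:ℝ) (2 * Real.pi),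
        (‖f ((r : ℂ) * Complex.exp ((θ : ℂ) * Complex.I))‖₊ : ℝ≥0∞) ^ p) /
      ENNReal.ofReal (2 * Real.pi)) ^ (1/p)) r ⟨hr0, hr1⟩
  have h2 : A / P ≤ (ENNReal.ofReal C)^p := by
    have h := ENNReal.rpow_le_rpow h1 (by positivity : (0:ℝ) ≤ p)
    rwa [← ENNReal.rpow_mul, one_div, inv_mul_cancel₀ (by positivity : p ≠ 0),
      ENNReal.rpow_one] at h
  have h3 : A ≤ P * (ENNReal.ofReal C)^p := by
    rw [ENNReal.div_le_iff hP0 hPt] at h2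
    rwa [mul_comm] at h2
  have hpt : ∀ x : ℝ≥0∞, x ^ p' ≤ 1 + x ^ p := by
    intro x
    rcases le_or_gt x 1 with h | h
    · exact le_trans (ENNReal.rpow_le_one h hp'0.le) le_self_add
    · exact le_trans (ENNReal.rpow_le_rpow_of_exponent_le h.le hp'p) le_add_self
  calc (∫⁻ θ in Ioc (0:ℝ) (2*Real.pi), (‖f (circleMap 0 r θ)‖₊ : ℝ≥0∞) ^ p')
      = ∫⁻ θ in Ioc (0:ℝ) (2*Real.pi),
          (‖f ((r:ℂ) * Complex.exp ((θ:ℂ)*Complex.I))‖₊:ℝ≥0∞) ^ p' := by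
        apply lintegral_congr
        intro θ
        congr 2
        simp [circleMap]
    _ ≤ ∫⁻ θ in Ioc (0:ℝ) (2*Real.pi),
          (1 + (‖f ((r:ℂ) * Complex.exp ((θ:ℂ)*Complex.I))‖₊:ℝ≥0∞) ^ p) :=
        lintegral_mono fun θ => hpt _
    _ = (volume (Ioc (0:ℝ) (2*Real.pi))) + A := by
        rw [lintegral_add_left measurable_const, ← hA]
        simp
    _ ≤ P + P * (ENNReal.ofReal C)^p := by
        apply add_le_add _ h3
        rw [Real.volume_Ioc, hP]
        simp
    _ = P * (1 + (ENNReal.ofReal C)^p) := by ring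

lemma tailJ (s α : ℝ) (hα0 : 0 < α) (hα1 : α < 1) (hs0 : 0 < s) (hs1 : s ≤ 1/2) :
    ∫⁻ t in Ico (1-s) 1, (ENNReal.ofReal ((1-t)^α))⁻¹
      ≤ ENNReal.ofReal (s^(1-α) * (1-α)⁻¹) := by
  set r := 1 - s with hr
  have hr1 : r < 1 := by rw [hr]; linarith
  rw [← setLIntegral_congr (Ioo_ae_eq_Ico (a := r) (b := 1))]
  have hptw : ∀ t ∈ Ioo r 1, (ENNReal.ofReal ((1-t)^α))⁻¹
      = ENNReal.ofReal ((1-t)^(-α)) := by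
    intro t ht
    have h1t : 0 < 1 - t := by linarith [ht.2]
    rw [← ENNReal.ofReal_inv_of_pos (Real.rpow_pos_of_pos h1t _), ← Real.rpow_neg h1t.le]
  rw [setLIntegral_congr_fun measurableSet_Ioo hptw]
  have hint : IntervalIntegrable (fun t : ℝ => (1-t)^(-α)) volume r 1 := by
    have h1 : IntervalIntegrable (fun x : ℝ => x^(-α)) volume (1-r) (1-1) :=
      intervalIntegrable_rpow' (by linarith)
    have h2 := h1.comp_sub_left 1
    simpa using h2
  have hIoo : IntegrableOn (fun t : ℝ => (1-t)^(-α)) (Ioo r 1) := by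
    have := (intervalIntegrable_iff_integrableOn_Ioc_of_le hr1.le).mp hint
    exact this.mono_set Ioo_subset_Ioc_self
  rw [← ofReal_integral_eq_lintegral_ofReal hIoo
    ((ae_restrict_iff' measurableSet_Ioo).2 (ae_of_all _ fun t ht =>
      Real.rpow_nonneg (by linarith [ht.2]) _))]
  apply ENNReal.ofReal_le_ofReal
  rw [← integral_Ioc_eq_integral_Ioo, ← intervalIntegral.integral_of_le hr1.le]
  have hcomp : (∫ t in r..1, (1-t)^(-α)) = ∫ x in (0:ℝ)..s, x^(-α) := by
    have := intervalIntegral.integral_comp_sub_left (a := r) (b := 1)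
      (fun x : ℝ => x^(-α)) 1
    simpa [hr] using this
  rw [hcomp, integral_rpow (Or.inl (by linarith))]
  rw [Real.zero_rpow (by linarith : -α + 1 ≠ 0)]
  have : -α + 1 = 1 - α := by ring
  rw [this]
  rw [div_eq_mul_inv]
  simp

lemma denom_lb (ζ : ℂ) (hζ : ‖ζ‖ = 1) (εm : ℝ) (hε0 : 0 < εm) (hε2 : εm ≤ 2)
    (hεζ : εm ≤ ‖ζ - 1‖) (t : ℝ) (ht0 : 0 ≤ t) (ht1 : t ≤ 1) :
    εm/4 ≤ ‖1 - (t:ℂ) * ζ‖ := by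
  have hre : ζ.re*ζ.re + ζ.im*ζ.im = 1 := by
    have : Complex.normSq ζ = 1 := by
      rw [← Complex.sq_norm, hζ]; norm_num
    simpa [Complex.normSq_apply] using this
  have hεsq : εm^2 ≤ (ζ.re-1)*(ζ.re-1) + ζ.im*ζ.im := by
    have h1 : εm^2 ≤ (‖ζ-1‖)^2 := by
      apply pow_le_pow_left₀ hε0.le hεζ
    rw [Complex.sq_norm] at h1
    simpa [Complex.normSq_apply, Complex.sub_re, Complex.sub_im] using h1
  have hsq : (εm/4)^2 ≤ Complex.normSq (1 - (t:ℂ) * ζ) := by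
    simp only [Complex.normSq_apply, Complex.sub_re, Complex.sub_im, Complex.mul_re,
      Complex.mul_im, Complex.ofReal_re, Complex.ofReal_im, Complex.one_re, Complex.one_im]
    ring_nf
    nlinarith [sq_nonneg (1 - t - εm^2/8), mul_nonneg (mul_nonneg hε0.le hε0.le) ht0,
      mul_nonneg (mul_nonneg hε0.le hε0.le) (sub_nonneg.2 ht1),
      mul_nonneg (mul_nonneg hε0.le hε0.le) (sub_nonneg.2 hε2), sq_nonneg εm, sq_nonneg (1-t),
      mul_nonneg ht0 (sub_nonneg.2 ht1)]
  calc εm/4 = Real.sqrt ((εm/4)^2) := (Real.sqrt_sq (by positivity)).symm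
    _ ≤ Real.sqrt (Complex.normSq (1 - (t:ℂ)*ζ)) := Real.sqrt_le_sqrt hsq
    _ = ‖1 - (t:ℂ)*ζ‖ := (Complex.norm_def _).symm

lemma growth (f : ℂ → ℂ) (hf : DifferentiableOn ℂ f (ball 0 1))
    (p' q : ℝ) (hpq : p'.HolderConjugate q) (hq : 2 ≤ q) (M : ℝ≥0∞)
    (hM : ∀ r, 0 ≤ r → r < 1 → (∫⁻ θ in Ioc (0:ℝ) (2*Real.pi),
       (‖f (circleMap 0 r θ)‖₊ : ℝ≥0∞) ^ p') ≤ ENNReal.ofReal (2*Real.pi) * M)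
    (z : ℂ) (hz1 : 1/2 ≤ ‖z‖) (hz2 : ‖z‖ < 1) :
    (‖f z‖₊ : ℝ≥0∞) ≤ (M / ENNReal.ofReal ((1 - ‖z‖)/2)) ^ (1/p') := by
  set x := ‖z‖ with hx
  have hx0 : 0 ≤ x := norm_nonneg z
  set ρ : ℝ := (1+x)/2 with hρdef
  set d : ℝ := (1-x)/2 with hddef
  have hd0 : 0 < d := by rw [hddef]; linarith
  have hρ0 : 0 < ρ := by rw [hρdef]; linarith
  have hρ1 : ρ < 1 := by rw [hρdef]; linarith
  have hxρ : x < ρ := by rw [hρdef]; linarith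
  have hρx1 : 1 ≤ ρ + x := by rw [hρdef, hddef] at *; linarith
  have hπ := Real.pi_pos
  set cm : ℝ → ℂ := circleMap 0 ρ with hcm
  have habs : ∀ θ : ℝ, ‖cm θ‖ = ρ := fun θ => by
    simp [hcm, norm_circleMap_zero, abs_of_pos hρ0]
  have hlow : ∀ θ : ℝ, d ≤ ‖cm θ - z‖ := by
    intro θ
    have h := norm_sub_norm_le (cm θ) z
    rw [habs θ] at h
    have : d ≤ ρ - x := by rw [hddef, hρdef]; linarith
    linarith
  have hne : ∀ θ : ℝ, cm θ - z ≠ 0 := by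
    intro θ h
    have := hlow θ
    rw [h] at this; simp at this; linarith
  -- continuity of f ∘ cm
  have hmemb : ∀ θ : ℝ, cm θ ∈ ball (0:ℂ) 1 := fun θ => by
    simp [mem_ball_zero_iff, habs θ, hρ1]
  have hfc : Continuous fun θ : ℝ => f (cm θ) := by
    apply (hf.continuousOn.mono (subset_refl _)).comp_continuous (continuous_circleMap 0 ρ) hmemb
  -- Cauchy formula
  have hzball : z ∈ ball (0:ℂ) ρ := by simp [mem_ball_zero_iff, ← hx, hxρ]
  have hd' : DifferentiableOn ℂ f (closedBall 0 ρ) :=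
    hf.mono (closedBall_subset_ball hρ1)
  have hC := hd'.circleIntegral_sub_inv_smul (w := z) hzball
  -- norm bound
  set G : ℝ → ℝ := fun θ => ρ * (‖f (cm θ)‖ * ‖cm θ - z‖⁻¹) with hG
  have hGc : Continuous G := by
    apply continuous_const.mul
    apply hfc.norm.mul
    apply Continuous.inv₀
    · exact ((continuous_circleMap 0 ρ).sub continuous_const).norm
    · intro θ; exact norm_ne_zero_iff.mpr (hne θ)
  have hGnn : ∀ θ, 0 ≤ G θ := by
    intro θ; apply mul_nonneg hρ0.le; positivity
  have hnorm : ‖f z‖ ≤ (2*Real.pi)⁻¹ * ∫ θ in (0:ℝ)..(2*Real.pi), G θ := by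
    have h2 : ‖(2 * (Real.pi:ℂ) * I) • f z‖ = (2*Real.pi) * ‖f z‖ := by
      rw [norm_smul]
      simp [abs_of_pos hπ]
    rw [← hC] at h2
    have h3 : ‖∮ w in C(0, ρ), (w - z)⁻¹ • f w‖ ≤ ∫ θ in (0:ℝ)..(2*Real.pi), G θ := by
      rw [circleIntegral]
      refine le_trans (intervalIntegral.norm_integral_le_integral_norm (by linarith)) (le_of_eq ?_)
      apply intervalIntegral.integral_congr
      intro θ _
      simp only [deriv_circleMap, norm_smul, norm_mul, norm_inv, hG]
      simp [habs θ, abs_of_pos hρ0, hcm]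
      exact Or.inl (mul_comm _ _)
    calc ‖f z‖ = (2*Real.pi)⁻¹ * ((2*Real.pi) * ‖f z‖) := by field_simp
    _ ≤ (2*Real.pi)⁻¹ * ∫ θ in (0:ℝ)..(2*Real.pi), G θ := by
        apply mul_le_mul_of_nonneg_left _ (by positivity)
        rw [← h2]; exact h3
  -- ENNReal part
  set P : ℝ≥0∞ := ENNReal.ofReal (2*Real.pi) with hP
  have hP0 : P ≠ 0 := by simp [hP]; positivity
  have hPt : P ≠ ⊤ := ENNReal.ofReal_ne_top
  set g : ℝ → ℝ≥0∞ := fun θ => (‖f (cm θ)‖₊ : ℝ≥0∞) with hg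
  set k : ℝ → ℝ≥0∞ := fun θ => ENNReal.ofReal (‖cm θ - z‖⁻¹) with hk
  have hgcont : Continuous g := ENNReal.continuous_coe.comp hfc.nnnorm
  have hkcont : Continuous k := by
    apply ENNReal.continuous_ofReal.comp
    apply Continuous.inv₀ ((continuous_circleMap 0 ρ).sub continuous_const).norm
    intro θ; exact norm_ne_zero_iff.mpr (hne θ)
  have hgk : ∀ θ, ENNReal.ofReal (G θ) ≤ (g * k) θ := by
    intro θ
    have h1 : G θ ≤ ‖f (cm θ)‖ * ‖cm θ - z‖⁻¹ := by
      rw [hG]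
      have : (0:ℝ) ≤ ‖f (cm θ)‖ * ‖cm θ - z‖⁻¹ := by positivity
      nlinarith [hρ1.le]
    refine le_trans (ENNReal.ofReal_le_ofReal h1) ?_
    rw [ENNReal.ofReal_mul (norm_nonneg _), ofReal_norm, enorm_eq_nnnorm]
    simp only [Pi.mul_apply]
    exact le_rfl
  have step1 : (‖f z‖₊ : ℝ≥0∞) ≤ P⁻¹ * ∫⁻ θ in Ioc (0:ℝ) (2*Real.pi), (g * k) θ := by
    rw [← enorm_eq_nnnorm, ← ofReal_norm]
    refine le_trans (ENNReal.ofReal_le_ofReal hnorm) ?_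
    rw [ENNReal.ofReal_mul (by positivity), ENNReal.ofReal_inv_of_pos (by positivity), ← hP]
    apply mul_le_mul_right ?_ P⁻¹
    rw [intervalIntegral.integral_of_le (by linarith)]
    rw [ofReal_integral_eq_lintegral_ofReal (hGc.integrableOn_Ioc)
      (Filter.Eventually.of_forall hGnn)]
    exact lintegral_mono hgk
  have holder := ENNReal.lintegral_mul_le_Lp_mul_Lq (volume.restrict (Ioc (0:ℝ) (2*Real.pi)))
    hpq hgcont.aemeasurable hkcont.aemeasurable
  have bound1 : (∫⁻ θ in Ioc (0:ℝ) (2*Real.pi), g θ ^ p') ≤ P * M := hM ρ hρ0.le hρ1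
  set D : ℝ≥0∞ := (ENNReal.ofReal d)⁻¹ with hD
  have hDofReal : ENNReal.ofReal d⁻¹ = D := ENNReal.ofReal_inv_of_pos hd0
  have hD0 : D ≠ 0 := by simp [hD]
  have hDt : D ≠ ⊤ := by simp [hD, hd0, ENNReal.ofReal_pos.mpr hd0]
  have hkd : ∀ θ, k θ ≤ D := by
    intro θ
    rw [← hDofReal, hk]
    apply ENNReal.ofReal_le_ofReal
    exact inv_anti₀ hd0 (hlow θ)
  have hk0 : ∀ θ, k θ ≠ 0 := by
    intro θ
    simp only [hk, ne_eq, ENNReal.ofReal_eq_zero, not_le]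
    exact inv_pos.mpr (lt_of_lt_of_le hd0 (hlow θ))
  have hq0 : (0:ℝ) < q := hpq.symm.pos
  have b2a : ∀ θ, k θ ^ q ≤ D ^ (q-2) * k θ ^ (2:ℝ) := by
    intro θ
    have : k θ ^ q = k θ ^ (q-2) * k θ ^ (2:ℝ) := by
      rw [← ENNReal.rpow_add _ _ (hk0 θ) ENNReal.ofReal_ne_top]
      norm_num
    rw [this]
    exact mul_le_mul_left (ENNReal.rpow_le_rpow (hkd θ) (by linarith)) _
  have b2b : (∫⁻ θ in Ioc (0:ℝ) (2*Real.pi), k θ ^ (2:ℝ))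
      = ENNReal.ofReal (2*Real.pi/(ρ^2 - Complex.normSq z)) := by
    have hptw : ∀ θ, k θ ^ (2:ℝ) = ENNReal.ofReal ((Complex.normSq (cm θ - z))⁻¹) := by
      intro θ
      have hpos : (0:ℝ) < ‖cm θ - z‖⁻¹ := by
        exact inv_pos.mpr (lt_of_lt_of_le hd0 (hlow θ))
      have hre : (Complex.normSq (cm θ - z))⁻¹ = (‖cm θ - z‖⁻¹) ^ (2:ℝ) := by
        have h2 : ((‖cm θ - z‖⁻¹) : ℝ) ^ (2:ℝ) = (‖cm θ - z‖⁻¹) ^ (2:ℕ) := by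
          rw [← Real.rpow_natCast]; norm_num
        rw [h2, inv_pow, Complex.sq_norm]
      rw [hre, hk]
      exact ENNReal.ofReal_rpow_of_pos hpos
    simp_rw [hptw]
    have hcont2 : Continuous fun θ : ℝ => (Complex.normSq (cm θ - z))⁻¹ := by
      apply Continuous.inv₀
      · exact Complex.continuous_normSq.comp ((continuous_circleMap 0 ρ).sub continuous_const)
      · intro θ; exact (Complex.normSq_pos.2 (hne θ)).ne'
    rw [← ofReal_integral_eq_lintegral_ofReal (hcont2.integrableOn_Ioc)
      (Filter.Eventually.of_forall (fun θ => inv_nonneg.mpr (Complex.normSq_nonneg _)))]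
    rw [← intervalIntegral.integral_of_le (by linarith)]
    rw [poissonInt ρ z hρ0 hxρ]
  have b2c : ENNReal.ofReal (2*Real.pi/(ρ^2 - Complex.normSq z)) ≤ P * D := by
    have hnsq : Complex.normSq z = x^2 := by rw [← Complex.sq_norm]
    have hden : d ≤ ρ^2 - Complex.normSq z := by
      rw [hnsq]
      have : ρ^2 - x^2 = (ρ - x) * (ρ + x) := by ring
      rw [this]
      have hdx : ρ - x = d := by rw [hρdef, hddef]; ring
      nlinarith [hd0]
    have hdivle : 2*Real.pi/(ρ^2 - Complex.normSq z) ≤ 2*Real.pi/d := by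
      gcongr
    refine le_trans (ENNReal.ofReal_le_ofReal hdivle) ?_
    rw [div_eq_mul_inv, ENNReal.ofReal_mul (by positivity), hDofReal]
  have bound2 : (∫⁻ θ in Ioc (0:ℝ) (2*Real.pi), k θ ^ q) ≤ P * D ^ (q-1) := by
    calc (∫⁻ θ in Ioc (0:ℝ) (2*Real.pi), k θ ^ q)
        ≤ ∫⁻ θ in Ioc (0:ℝ) (2*Real.pi), D ^ (q-2) * k θ ^ (2:ℝ) := lintegral_mono b2a
      _ = D ^ (q-2) * ∫⁻ θ in Ioc (0:ℝ) (2*Real.pi), k θ ^ (2:ℝ) :=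
          lintegral_const_mul' _ _ (ENNReal.rpow_ne_top_of_nonneg (by linarith) hDt)
      _ ≤ D ^ (q-2) * (P * D) := mul_le_mul_right (b2b ▸ b2c) _
      _ = P * (D ^ (q-2) * D ^ (1:ℝ)) := by rw [ENNReal.rpow_one]; ring
      _ = P * D ^ (q-1) := by
          rw [← ENNReal.rpow_add _ _ hD0 hDt]
          congr 1
          ring
  -- combine
  have hp'0 : (0:ℝ) < p' := hpq.pos
  have key : (‖f z‖₊ : ℝ≥0∞) ≤ P⁻¹ * ((P * M) ^ (1/p') * (P * D ^ (q-1)) ^ (1/q)) := by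
    refine le_trans step1 (mul_le_mul_right ?_ _)
    refine le_trans holder ?_
    exact mul_le_mul' (ENNReal.rpow_le_rpow bound1 (by positivity))
      (ENNReal.rpow_le_rpow bound2 (by positivity))
  have hsum : 1/p' + 1/q = 1 := by
    rw [one_div, one_div]; exact hpq.inv_add_inv_eq_one
  have heval : P⁻¹ * ((P * M) ^ (1/p') * (P * D ^ (q-1)) ^ (1/q))
      = M ^ (1/p') * D ^ (1/p') := by
    rw [ENNReal.mul_rpow_of_nonneg P M (by positivity),
        ENNReal.mul_rpow_of_nonneg P (D ^ (q-1)) (by positivity)]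
    rw [← ENNReal.rpow_mul D (q-1) (1/q)]
    have hqp' : (q-1) * (1/q) = 1/p' := by
      have h1 : 1/p' + 1/q = 1 := hsum
      field_simp
      field_simp at h1
      nlinarith [h1]
    rw [hqp']
    have hPP : P ^ (1/p') * P ^ (1/q) = P := by
      rw [← ENNReal.rpow_add _ _ hP0 hPt, hsum, ENNReal.rpow_one]
    calc P⁻¹ * (P ^ (1/p') * M ^ (1/p') * (P ^ (1/q) * D ^ (1/p')))
        = (P⁻¹ * (P ^ (1/p') * P ^ (1/q))) * (M ^ (1/p') * D ^ (1/p')) := by ring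
      _ = M ^ (1/p') * D ^ (1/p') := by rw [hPP, ENNReal.inv_mul_cancel hP0 hPt, one_mul]
  rw [heval] at key
  refine le_trans key (le_of_eq ?_)
  have hMD : M / ENNReal.ofReal d = M * D := by rw [hD, div_eq_mul_inv]
  rw [hMD]
  exact (ENNReal.mul_rpow_of_nonneg M D (by positivity)).symm

end Helpers

/-- for a bounded sequence in `H^p` (`1 < p < ∞`) tending to `0` uniformly on
compacta, the integrals `∫₀^1 |f_n(tζ)|/|1-tζ| dt` tend to `0` uniformly on
`{ζ ∈ 𝕋 : |ζ - 1| ≥ ε}`; in particular the Cesàro means `C f_n(ζ)` tend to `0`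
uniformly there. -/
theorem cesaro_means_uniformly_small_away_from_one
    (p : ℝ) (hp : 1 < p)
    (f : ℕ → ℂ → ℂ)
    (hfa : ∀ n, DifferentiableOn ℂ (f n) (Metric.ball (0:ℂ) 1))
    (hbd : ∃ C : ℝ, ∀ n, eHpNorm p (f n) ≤ ENNReal.ofReal C)
    (hfc : TendstoZeroOnCompacts f) :
    ∀ ε : ℝ, 0 < ε → ∀ δ : ℝ, 0 < δ → ∃ N : ℕ, ∀ n ≥ N,
      ∀ ζ ∈ Metric.sphere (0:ℂ) 1, ε ≤ ‖ζ - 1‖ →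
        (∫⁻ t in Set.Ioo (0:ℝ) 1,
            (‖f n ((t : ℂ) * ζ)‖₊ : ℝ≥0∞) / (‖1 - (t : ℂ) * ζ‖₊ : ℝ≥0∞))
            < ENNReal.ofReal δ ∧
        ‖cesaro (f n) ζ‖ < δ := by
  obtain ⟨C, hC⟩ := hbd
  have hp0 : 0 < p := lt_trans one_pos hp
  set p' := min p 2 with hp'def
  have hp'1 : 1 < p' := lt_min hp one_lt_two
  have hp'0 : 0 < p' := lt_trans one_pos hp'1
  have hp'2 : p' ≤ 2 := min_le_right _ _
  have hp'p : p' ≤ p := min_le_left _ _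
  have hpq : p'.HolderConjugate (Real.conjExponent p') := Real.HolderConjugate.conjExponent hp'1
  set q := Real.conjExponent p' with hqdef
  have hq2 : 2 ≤ q := by
    rw [hqdef, Real.conjExponent, le_div_iff₀ (by linarith)]
    linarith
  set α := 1/p' with hα
  have hα0 : 0 < α := by rw [hα]; positivity
  have hα1 : α < 1 := by rw [hα, div_lt_one hp'0]; linarith
  have h1α : 0 < 1 - α := by linarith
  set M : ℝ≥0∞ := 1 + (ENNReal.ofReal C)^p with hM
  have hMt : M ≠ ⊤ := by
    rw [hM]
    exact ENNReal.add_ne_top.mpr ⟨ENNReal.one_ne_top,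
      ENNReal.rpow_ne_top_of_nonneg hp0.le ENNReal.ofReal_ne_top⟩
  have hgrow : ∀ n (z : ℂ), 1/2 ≤ ‖z‖ → ‖z‖ < 1 →
      (‖f n z‖₊ : ℝ≥0∞) ≤ (M / ENNReal.ofReal ((1 - ‖z‖)/2)) ^ α :=
    fun n z h1 h2 => growth (f n) (hfa n) p' q hpq hq2 M
      (fun r hr0 hr1 => circle_bound p p' hp hp'0 hp'p (f n) C (hC n) r hr0 hr1) z h1 h2
  intro ε hε δ hδ
  set εm := min ε 2 with hεm
  have hεm0 : 0 < εm := lt_min hε two_pos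
  have hεm2 : εm ≤ 2 := min_le_right _ _
  set c1 : ℝ≥0∞ := ENNReal.ofReal (4/εm) with hc1
  have hc1t : c1 ≠ ⊤ := ENNReal.ofReal_ne_top
  have h2Mt : (2*M)^α ≠ ⊤ := by
    apply ENNReal.rpow_ne_top_of_nonneg hα0.le
    exact ENNReal.mul_ne_top (by simp) hMt
  set K : ℝ≥0∞ := c1 * (2*M)^α * ENNReal.ofReal ((1-α)⁻¹) with hK
  have hKt : K ≠ ⊤ := by
    rw [hK]
    exact ENNReal.mul_ne_top (ENNReal.mul_ne_top hc1t h2Mt) ENNReal.ofReal_ne_top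
  set s : ℝ := min (1/2) ((δ/(4*(K.toReal+1)))^((1-α)⁻¹)) with hs
  have hKpos : 0 < K.toReal + 1 := by positivity
  have hs0 : 0 < s := lt_min (by norm_num) (Real.rpow_pos_of_pos (by positivity) _)
  have hs12 : s ≤ 1/2 := min_le_left _ _
  have hspow : s^(1-α) ≤ δ/(4*(K.toReal+1)) := by
    have h1 : s ≤ (δ/(4*(K.toReal+1)))^((1-α)⁻¹) := min_le_right _ _
    have h2 := Real.rpow_le_rpow hs0.le h1 (by linarith : (0:ℝ) ≤ 1-α)
    rwa [← Real.rpow_mul (by positivity), inv_mul_cancel₀ (by linarith : (1:ℝ)-α ≠ 0),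
      Real.rpow_one] at h2
  have hstail : K * ENNReal.ofReal (s^(1-α)) ≤ ENNReal.ofReal (δ/4) := by
    calc K * ENNReal.ofReal (s^(1-α))
        ≤ ENNReal.ofReal (K.toReal+1) * ENNReal.ofReal (δ/(4*(K.toReal+1))) := by
          apply mul_le_mul'
          · exact le_trans (le_of_eq (ENNReal.ofReal_toReal hKt).symm)
              (ENNReal.ofReal_le_ofReal (by linarith))
          · exact ENNReal.ofReal_le_ofReal hspow
      _ = ENNReal.ofReal ((K.toReal+1) * (δ/(4*(K.toReal+1)))) :=
          (ENNReal.ofReal_mul (by positivity)).symm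
      _ = ENNReal.ofReal (δ/4) := by
          congr 1
          field_simp
  set r : ℝ := 1 - s with hrdef
  have hr12 : 1/2 ≤ r := by rw [hrdef]; linarith
  have hr1 : r < 1 := by rw [hrdef]; linarith
  have hr0 : 0 ≤ r := by linarith
  set η := εm*δ/32 with hη
  have hη0 : 0 < η := by rw [hη]; positivity
  have hUC := hfc (closedBall 0 r) (closedBall_subset_ball hr1) (isCompact_closedBall _ _)
  rw [Metric.tendstoUniformlyOn_iff] at hUC
  obtain ⟨N, hN⟩ := Filter.eventually_atTop.mp (hUC η hη0)
  refine ⟨N, fun n hn ζ hζ hεζ => ?_⟩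
  have hζ1 : ‖ζ‖ = 1 := by
    rw [mem_sphere_zero_iff_norm] at hζ
    exact hζ
  have hεmζ : εm ≤ ‖ζ - 1‖ := le_trans (min_le_left _ _) hεζ
  have hden : ∀ t : ℝ, 0 ≤ t → t ≤ 1 → εm/4 ≤ ‖1 - (t:ℂ)*ζ‖ :=
    fun t a b => denom_lb ζ hζ1 εm hεm0 hεm2 hεmζ t a b
  have habs_t : ∀ t : ℝ, 0 ≤ t → ‖(t:ℂ)*ζ‖ = t := by
    intro t ht
    rw [norm_mul, hζ1, Complex.norm_real, Real.norm_eq_abs, _root_.abs_of_nonneg ht, mul_one]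
  have hnn0 : ∀ t : ℝ, 0 ≤ t → t ≤ 1 → (‖1 - (t:ℂ)*ζ‖₊ : ℝ≥0∞) ≠ 0 := by
    intro t h0 h1
    simp only [ne_eq, ENNReal.coe_eq_zero, nnnorm_eq_zero]
    intro h
    have := hden t h0 h1
    rw [h] at this
    simp at this
    linarith
  have hinv : ∀ t : ℝ, 0 ≤ t → t ≤ 1 → ((‖1 - (t:ℂ)*ζ‖₊ : ℝ≥0∞))⁻¹ ≤ c1 := by
    intro t h0 h1
    have h2 : ENNReal.ofReal (εm/4) ≤ (‖1 - (t:ℂ)*ζ‖₊ : ℝ≥0∞) := by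
      rw [← enorm_eq_nnnorm, ← ofReal_norm]
      exact ENNReal.ofReal_le_ofReal (hden t h0 h1)
    calc ((‖1 - (t:ℂ)*ζ‖₊ : ℝ≥0∞))⁻¹ ≤ (ENNReal.ofReal (εm/4))⁻¹ := ENNReal.inv_le_inv' h2
      _ = c1 := by rw [← ENNReal.ofReal_inv_of_pos (by positivity), inv_div]
  have hFe : ∀ t : ℝ, 0 ≤ t → t ≤ 1 →
      (‖f n ((t:ℂ)*ζ)‖₊ : ℝ≥0∞) / (‖1 - (t:ℂ)*ζ‖₊ : ℝ≥0∞)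
        ≤ c1 * (‖f n ((t:ℂ)*ζ)‖₊ : ℝ≥0∞) := by
    intro t h0 h1
    rw [div_eq_mul_inv, mul_comm c1]
    exact mul_le_mul_right (hinv t h0 h1) _
  have hpart1 : (∫⁻ t in Ioo (0:ℝ) r,
      (‖f n ((t:ℂ)*ζ)‖₊:ℝ≥0∞) / (‖1-(t:ℂ)*ζ‖₊:ℝ≥0∞)) ≤ ENNReal.ofReal (δ/8) := by
    have hb : ∀ t ∈ Ioo (0:ℝ) r, (‖f n ((t:ℂ)*ζ)‖₊:ℝ≥0∞)/(‖1-(t:ℂ)*ζ‖₊:ℝ≥0∞)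
        ≤ c1 * ENNReal.ofReal η := by
      intro t ht
      refine le_trans (hFe t ht.1.le (by linarith [ht.2])) ?_
      apply mul_le_mul_right
      have hmem : (t:ℂ)*ζ ∈ closedBall (0:ℂ) r := by
        rw [mem_closedBall_zero_iff, habs_t t ht.1.le]
        exact ht.2.le
      have hd := hN n hn ((t:ℂ)*ζ) hmem
      rw [Pi.zero_apply, dist_zero_left] at hd
      rw [← enorm_eq_nnnorm, ← ofReal_norm]
      exact ENNReal.ofReal_le_ofReal hd.le
    calc (∫⁻ t in Ioo (0:ℝ) r, (‖f n ((t:ℂ)*ζ)‖₊:ℝ≥0∞)/(‖1-(t:ℂ)*ζ‖₊:ℝ≥0∞))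
        ≤ ∫⁻ _ in Ioo (0:ℝ) r, c1 * ENNReal.ofReal η :=
          setLIntegral_mono' measurableSet_Ioo hb
      _ = c1 * ENNReal.ofReal η * volume (Ioo (0:ℝ) r) := setLIntegral_const _ _
      _ ≤ c1 * ENNReal.ofReal η * 1 := by
          apply mul_le_mul_right
          rw [Real.volume_Ioo]
          exact ENNReal.ofReal_le_one.mpr (by linarith)
      _ = ENNReal.ofReal ((4/εm) * η) := by
          rw [mul_one, hc1, ← ENNReal.ofReal_mul (by positivity)]
      _ ≤ ENNReal.ofReal (δ/8) := by
          apply ENNReal.ofReal_le_ofReal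
          rw [hη]
          rw [div_mul_eq_mul_div, mul_comm]
          rw [div_le_iff₀ (by positivity)]
          field_simp
          nlinarith [hεm0]
  have hpart2 : (∫⁻ t in Ico r 1,
      (‖f n ((t:ℂ)*ζ)‖₊:ℝ≥0∞) / (‖1-(t:ℂ)*ζ‖₊:ℝ≥0∞)) ≤ ENNReal.ofReal (δ/4) := by
    have hb : ∀ t ∈ Ico r 1, (‖f n ((t:ℂ)*ζ)‖₊:ℝ≥0∞)/(‖1-(t:ℂ)*ζ‖₊:ℝ≥0∞)
        ≤ c1 * (2*M)^α * (ENNReal.ofReal ((1-t)^α))⁻¹ := by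
      intro t ht
      have ht0 : (0:ℝ) ≤ t := le_trans (by linarith) ht.1
      have ht1 : t < 1 := ht.2
      have ht1' : 0 < 1 - t := by linarith
      refine le_trans (hFe t ht0 ht1.le) ?_
      rw [mul_assoc]
      apply mul_le_mul_right
      have h1 : (‖f n ((t:ℂ)*ζ)‖₊:ℝ≥0∞) ≤ (M / ENNReal.ofReal ((1-t)/2))^α := by
        have hg := hgrow n ((t:ℂ)*ζ) (by rw [habs_t t ht0]; linarith [ht.1])
          (by rw [habs_t t ht0]; exact ht1)
        rwa [habs_t t ht0] at hg
      refine le_trans h1 ?_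
      have h2 : M / ENNReal.ofReal ((1-t)/2) ≤ 2*M / ENNReal.ofReal (1-t) := by
        have h3 : ENNReal.ofReal ((1-t)/2) = ENNReal.ofReal (1-t) / 2 := by
          rw [ENNReal.ofReal_div_of_pos (by norm_num)]
          norm_num
        rw [h3, div_eq_mul_inv, ENNReal.inv_div (Or.inl (by simp)) (Or.inl (by simp))]
        rw [mul_comm 2 M, mul_div_assoc]
      calc (M / ENNReal.ofReal ((1-t)/2))^α ≤ (2*M / ENNReal.ofReal (1-t))^α :=
            ENNReal.rpow_le_rpow h2 hα0.le
        _ = (2*M)^α / (ENNReal.ofReal (1-t))^α := ENNReal.div_rpow_of_nonneg _ _ hα0.le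
        _ = (2*M)^α * (ENNReal.ofReal ((1-t)^α))⁻¹ := by
            rw [div_eq_mul_inv, ENNReal.ofReal_rpow_of_pos ht1']
    calc (∫⁻ t in Ico r 1, (‖f n ((t:ℂ)*ζ)‖₊:ℝ≥0∞)/(‖1-(t:ℂ)*ζ‖₊:ℝ≥0∞))
        ≤ ∫⁻ t in Ico r 1, c1 * (2*M)^α * (ENNReal.ofReal ((1-t)^α))⁻¹ :=
          setLIntegral_mono' measurableSet_Ico hb
      _ = c1 * (2*M)^α * ∫⁻ t in Ico r 1, (ENNReal.ofReal ((1-t)^α))⁻¹ :=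
          lintegral_const_mul' _ _ (ENNReal.mul_ne_top hc1t h2Mt)
      _ ≤ c1 * (2*M)^α * ENNReal.ofReal (s^(1-α) * (1-α)⁻¹) := by
          apply mul_le_mul_right
          have := tailJ s α hα0 hα1 hs0 hs12
          rw [hrdef]
          exact this
      _ = K * ENNReal.ofReal (s^(1-α)) := by
          rw [hK, ENNReal.ofReal_mul (by positivity)]
          ring
      _ ≤ ENNReal.ofReal (δ/4) := hstail
  have hmain : (∫⁻ t in Set.Ioo (0:ℝ) 1,
      (‖f n ((t:ℂ)*ζ)‖₊:ℝ≥0∞) / (‖1-(t:ℂ)*ζ‖₊:ℝ≥0∞)) < ENNReal.ofReal δ := by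
    have hsub : Ioo (0:ℝ) 1 ⊆ Ioo 0 r ∪ Ico r 1 := by
      intro t ht
      rcases lt_or_ge t r with h|h
      · exact Or.inl ⟨ht.1, h⟩
      · exact Or.inr ⟨h, ht.2⟩
    have hdisj : Disjoint (Ioo (0:ℝ) r) (Ico r 1) := by
      apply Set.disjoint_left.mpr
      intro t h1 h2
      exact absurd h2.1 (not_le.mpr h1.2)
    calc (∫⁻ t in Set.Ioo (0:ℝ) 1, (‖f n ((t:ℂ)*ζ)‖₊:ℝ≥0∞)/(‖1-(t:ℂ)*ζ‖₊:ℝ≥0∞))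
        ≤ ∫⁻ t in (Ioo (0:ℝ) r ∪ Ico r 1),
            (‖f n ((t:ℂ)*ζ)‖₊:ℝ≥0∞)/(‖1-(t:ℂ)*ζ‖₊:ℝ≥0∞) := lintegral_mono_set hsub
      _ = (∫⁻ t in Ioo (0:ℝ) r, (‖f n ((t:ℂ)*ζ)‖₊:ℝ≥0∞)/(‖1-(t:ℂ)*ζ‖₊:ℝ≥0∞))
          + ∫⁻ t in Ico r 1, (‖f n ((t:ℂ)*ζ)‖₊:ℝ≥0∞)/(‖1-(t:ℂ)*ζ‖₊:ℝ≥0∞) :=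
          lintegral_union measurableSet_Ico hdisj
      _ ≤ ENNReal.ofReal (δ/8) + ENNReal.ofReal (δ/4) := add_le_add hpart1 hpart2
      _ = ENNReal.ofReal (δ/8 + δ/4) := (ENNReal.ofReal_add (by positivity) (by positivity)).symm
      _ < ENNReal.ofReal δ := (ENNReal.ofReal_lt_ofReal_iff hδ).mpr (by linarith)
  refine ⟨hmain, ?_⟩
  -- cesaro part
  set F : ℝ → ℂ := fun t => f n ((t:ℂ)*ζ) / (1 - (t:ℂ)*ζ) with hF
  have hFcont : ContinuousOn F (Ioo 0 1) := by
    apply ContinuousOn.div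
    · apply ContinuousOn.comp (hfa n).continuousOn
      · exact (Complex.continuous_ofReal.mul continuous_const).continuousOn
      · intro t ht
        rw [mem_ball_zero_iff, habs_t t ht.1.le]
        exact ht.2
    · exact (continuous_const.sub (Complex.continuous_ofReal.mul continuous_const)).continuousOn
    · intro t ht
      intro h
      have := hden t ht.1.le ht.2.le
      rw [h] at this
      simp at this
      linarith
  have hmeas : AEStronglyMeasurable F (volume.restrict (Ioo (0:ℝ) 1)) :=
    hFcont.aestronglyMeasurable measurableSet_Ioo
  have habs : ‖cesaro (f n) ζ‖ ≤
      (∫⁻ t in Set.Ioo (0:ℝ) 1, (‖f n ((t:ℂ)*ζ)‖₊:ℝ≥0∞)/(‖1-(t:ℂ)*ζ‖₊:ℝ≥0∞)).toReal := by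
    have h1 : ‖cesaro (f n) ζ‖ ≤ ∫ t in (0:ℝ)..1, ‖F t‖ := by
      rw [cesaro]
      exact intervalIntegral.norm_integral_le_integral_norm zero_le_one
    have h2 : (∫ t in (0:ℝ)..1, ‖F t‖) = ∫ t in Ioo (0:ℝ) 1, ‖F t‖ := by
      rw [intervalIntegral.integral_of_le zero_le_one, integral_Ioc_eq_integral_Ioo]
    have h3 : (∫ t in Ioo (0:ℝ) 1, ‖F t‖)
        = (∫⁻ t in Ioo (0:ℝ) 1, ENNReal.ofReal ‖F t‖).toReal :=
      integral_eq_lintegral_of_nonneg_ae (ae_of_all _ fun t => norm_nonneg _) hmeas.norm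
    have h4 : (∫⁻ t in Ioo (0:ℝ) 1, ENNReal.ofReal ‖F t‖)
        = ∫⁻ t in Set.Ioo (0:ℝ) 1, (‖f n ((t:ℂ)*ζ)‖₊:ℝ≥0∞)/(‖1-(t:ℂ)*ζ‖₊:ℝ≥0∞) := by
      apply setLIntegral_congr_fun measurableSet_Ioo
      intro t ht
      beta_reduce
      rw [ofReal_norm, enorm_eq_nnnorm, nnnorm_div, ENNReal.coe_div]
      intro h
      have h' := hnn0 t ht.1.le ht.2.le
      simp only [ne_eq, ENNReal.coe_eq_zero] at h'
      exact h' h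
    rw [h2, h3, h4] at h1
    exact h1
  have := ENNReal.toReal_lt_of_lt_ofReal hmain
  linarith [habs]
end

section
/- Let K ⊂ 𝕋 be a nonempty compact proper subset of 𝕋 and set Ω = ⋃_{ζ∈K} S(ζ). Write 𝕋 ∖ K = ⋃_j I_j, where the I_j are the (pairwise disjoint, open) connected components of 𝕋 ∖ K, let ζ_j be the midpoint of I_j, and define W_j = W(ζ_j, 2π·m(I_j)) when 2π·m(I_j) < 1 and W_j = 𝔻 otherwise. Then the topological boundary of Ω satisfies ∂Ω ⊆ K ∪ ⋃_j cl(W_j), where cl denotes closure. -/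
open MeasureTheory Set Metric Complex Filter Topology ENNReal NNReal

set_option maxHeartbeats 1000000

private lemma arg_exp_of_Ioc {θ : ℝ} (hθ : θ ∈ Set.Ioc (-Real.pi) Real.pi) :
    Complex.arg (Complex.exp ((θ:ℂ) * Complex.I)) = θ := by
  rw [Complex.exp_mul_I]
  exact Complex.arg_cos_add_sin_mul_I hθ

private lemma arg_exp_mul {s : ℝ} {u : ℂ} (hu : u ≠ 0)
    (h : s + Complex.arg u ∈ Set.Ioc (-Real.pi) Real.pi) :
    Complex.arg (Complex.exp ((s:ℂ) * Complex.I) * u) = s + Complex.arg u := by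
  have h1 : Complex.exp ((s:ℂ)*Complex.I) * u
      = (‖u‖ : ℂ) * Complex.exp (((s + Complex.arg u : ℝ):ℂ) * Complex.I) := by
    have e : ((s + Complex.arg u : ℝ):ℂ) * Complex.I
        = (s:ℂ)*Complex.I + (Complex.arg u : ℂ)*Complex.I := by push_cast; ring
    rw [e, Complex.exp_add]
    conv_lhs => rw [← Complex.norm_mul_exp_arg_mul_I u]
    ring
  rw [h1, Complex.arg_real_mul _ (norm_pos_iff.mpr hu), arg_exp_of_Ioc h]

private lemma mem_stolz {ζ z : ℂ} (hζ : ‖ζ‖ = 1)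
    (h1 : 1/2 ≤ ‖z‖) (h2 : ‖z‖ < 1)
    (hθa : |Complex.arg (z/ζ)| < 11/20 * (1 - ‖z‖)) :
    z ∈ stolzDomain ζ := by
  have hζ0 : ζ ≠ 0 := by intro h; simp [h] at hζ
  set r := ‖z‖ with hr
  set θ := Complex.arg (z/ζ) with hθdef
  have hur : ‖z/ζ‖ = r := by rw [norm_div, hζ, div_one]
  have hu0 : z/ζ ≠ 0 := by
    intro h
    rw [h, norm_zero] at hur
    linarith
  set c := Real.cos θ with hcdef
  have hre : (z/ζ).re = r * c := by
    have h3 := Complex.cos_arg hu0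
    rw [← hθdef, hur] at h3
    rw [hcdef, h3]
    field_simp
  have hsq : (z/ζ).re^2 + (z/ζ).im^2 = r^2 := by
    rw [← hur, Complex.sq_norm, Complex.normSq_apply]; ring
  set t := (4*r*c - 1)/3 with htdef
  have hc1 : c ≤ 1 := Real.cos_le_one θ
  have hc2 : 1 - θ^2/2 ≤ c := Real.one_sub_sq_div_two_le_cos
  have hθ2 : θ^2 ≤ (11/20*(1-r))^2 := by
    nlinarith [_root_.sq_abs θ, abs_nonneg θ, hθa]
  have h4rc : 1 < 4*r*c := by nlinarith
  have ht0 : 0 ≤ t := by rw [htdef]; linarith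
  have ht1 : t < 1 := by
    rw [htdef]
    nlinarith
  have h1t : (0:ℝ) < 1 - t := by linarith
  have hkey : ‖z - (t:ℂ)*ζ‖ < (1 - t)/2 := by
    have hfac : z - (t:ℂ)*ζ = ζ * (z/ζ - (t:ℂ)) := by field_simp
    rw [hfac, norm_mul, hζ, one_mul]
    have hsq2 : ‖z/ζ - (t:ℂ)‖^2 = r^2 - 2*t*r*c + t^2 := by
      rw [Complex.sq_norm, Complex.normSq_apply, Complex.sub_re, Complex.sub_im,
        Complex.ofReal_re, Complex.ofReal_im, hre]
      nlinarith [hsq, hre]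
    have h1r2 : 0 < (1-r)^2 := by apply pow_pos; linarith
    have e1 : 4*r - 1 - 2*θ^2 ≤ 4*r*c - 1 := by nlinarith [hc2, h2.le, sq_nonneg θ]
    have e0 : 0 ≤ 4*r - 1 - 2*θ^2 := by nlinarith [hθ2, sq_nonneg θ]
    have e2 : 12*r^2 - 3 < (4*r - 1 - 2*θ^2)^2 := by
      have h12 : 12*θ^2 ≤ (363/100)*(1-r)^2 := by nlinarith [hθ2]
      nlinarith [sq_nonneg (θ^2), h12, h1r2, hθ2, e0]
    have e3 : (4*r - 1 - 2*θ^2)^2 ≤ (4*r*c - 1)^2 := by nlinarith [e0, e1]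
    have hineq : 4*r^2 - 1 < 3*t^2 := by
      have h9 : 3*t^2 = (4*r*c-1)^2/3 := by rw [htdef]; ring
      linarith [e2, e3, h9]
    have hid : r^2 - 2*t*r*c + t^2 - ((1-t)/2)^2 = (4*r^2 - 1 - 3*t^2)/4 := by
      rw [htdef]; ring
    refine lt_of_pow_lt_pow_left₀ 2 (by linarith) ?_
    rw [hsq2]
    linarith [hid, hineq]
  set w : ℂ := (z - (t:ℂ)*ζ) / ((1 - t : ℝ):ℂ) with hw
  have hwball : w ∈ Metric.ball (0:ℂ) (1/2) := by
    rw [mem_ball_zero_iff]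
    have hnw : ‖w‖ = ‖z - (t:ℂ)*ζ‖ / (1-t) := by
      rw [hw, norm_div, Complex.norm_real, Real.norm_eq_abs, abs_of_pos h1t]
    rw [hnw, div_lt_iff₀ h1t]
    linarith
  have hcomb : (1 - t) • w + t • ζ = z := by
    have hne : (1:ℂ) - (t:ℂ) ≠ 0 := by
      rw [← Complex.ofReal_one, ← Complex.ofReal_sub, Complex.ofReal_ne_zero]
      exact h1t.ne'
    rw [hw, Complex.real_smul, Complex.real_smul]
    push_cast
    field_simp
    ring
  have hconv : Convex ℝ (convexHull ℝ (Metric.ball (0:ℂ) (1/2) ∪ {ζ})) := convex_convexHull _ _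
  have hb : Metric.ball (0:ℂ) (1/2) ⊆ convexHull ℝ (Metric.ball (0:ℂ) (1/2) ∪ {ζ}) :=
    Set.subset_union_left.trans (subset_convexHull ℝ _)
  have hwint : w ∈ interior (convexHull ℝ (Metric.ball (0:ℂ) (1/2) ∪ {ζ})) :=
    (Metric.isOpen_ball.subset_interior_iff.mpr hb) hwball
  have hζmem : ζ ∈ convexHull ℝ (Metric.ball (0:ℂ) (1/2) ∪ {ζ}) :=
    subset_convexHull ℝ _ (Set.mem_union_right _ rfl)
  have hfin := hconv.combo_interior_self_mem_interior hwint hζmem h1t ht0 (by ring)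
  rw [hcomb] at hfin
  exact hfin


/-- boundary of the union of Stolz domains. If `K ⊊ 𝕋` is a nonempty
compact set, `Ω = ⋃_{ζ∈K} S(ζ)`, `(I i)` are the connected components of `𝕋 ∖ K` with
midpoints `ζmid i`, and `W i = W(ζmid i, 2π·m(I i))` (taken to be `𝔻` when
`2π·m(I i) ≥ 1`), then `∂Ω ⊆ K ∪ ⋃ i, cl(W i)`. -/
theorem boundary_of_stolz_union
    (K : Set ℂ) (hK : K ⊆ Metric.sphere (0:ℂ) 1) (hKc : IsCompact K) (hKne : K.Nonempty)
    (hKproper : K ≠ Metric.sphere (0:ℂ) 1)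
    (ι : Type) (I : ι → Set ℂ)
    (hIcomp : ∀ i, ∃ x ∈ Metric.sphere (0:ℂ) 1 \ K,
      I i = connectedComponentIn (Metric.sphere (0:ℂ) 1 \ K) x)
    (hIcover : (⋃ i, I i) = Metric.sphere (0:ℂ) 1 \ K)
    (hIdisj : Pairwise (Function.onFun Disjoint I))
    (ζmid : ι → ℂ) (hmid : ∀ i, ζmid i ∈ Metric.sphere (0:ℂ) 1 ∧
      I i = {ξ ∈ Metric.sphere (0:ℂ) 1 |
        |Complex.arg (ξ / ζmid i)| < Real.pi * (circleMeasure (I i)).toReal}) :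
    frontier (⋃ ζ ∈ K, stolzDomain ζ) ⊆
      K ∪ ⋃ i, closure
        (if 2 * Real.pi * (circleMeasure (I i)).toReal < 1 then
          carlesonWindow (ζmid i) (2 * Real.pi * (circleMeasure (I i)).toReal)
        else Metric.ball (0:ℂ) 1) := by
  intro z hz
  set Ω : Set ℂ := ⋃ ζ ∈ K, stolzDomain ζ with hΩ
  have hΩopen : IsOpen Ω := isOpen_biUnion (fun ζ _ => isOpen_interior)
  rw [hΩopen.frontier_eq] at hz
  obtain ⟨hzcl, hzΩ⟩ := hz
  have hΩball : Ω ⊆ Metric.closedBall (0:ℂ) 1 := by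
    intro x hx
    simp only [hΩ, Set.mem_iUnion] at hx
    obtain ⟨ζ, hζK, hxζ⟩ := hx
    have hsub : convexHull ℝ (Metric.ball (0:ℂ) (1/2) ∪ {ζ}) ⊆ Metric.closedBall 0 1 := by
      apply convexHull_min
      · rintro y (hy | rfl)
        · exact Metric.ball_subset_closedBall ((Metric.ball_subset_ball (by norm_num)) hy)
        · exact Metric.sphere_subset_closedBall (hK hζK)
      · exact convex_closedBall _ _
    exact hsub (interior_subset hxζ)
  have hr1 : ‖z‖ ≤ 1 := by
    have h := closure_minimal hΩball Metric.isClosed_closedBall hzcl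
    rw [Metric.mem_closedBall, dist_zero_right] at h
    exact h
  obtain ⟨ζ₀, hζ₀⟩ := hKne
  have hr2 : 1/2 ≤ ‖z‖ := by
    by_contra hlt
    push_neg at hlt
    have hzball : z ∈ Metric.ball (0:ℂ) (1/2) := by
      rw [mem_ball_zero_iff]; exact hlt
    exact hzΩ (Set.mem_biUnion hζ₀
      ((Metric.isOpen_ball.subset_interior_iff.mpr
        (Set.subset_union_left.trans (subset_convexHull ℝ _))) hzball))
  by_cases hzK : z ∈ K
  · exact Or.inl hzK
  by_cases hre : ‖z‖ = 1
  · -- z on the unit circle, not in K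
    have hzsph : z ∈ Metric.sphere (0:ℂ) 1 := by
      rw [mem_sphere_zero_iff_norm]; exact hre
    have hzd : z ∈ (⋃ i, I i) := by rw [hIcover]; exact ⟨hzsph, hzK⟩
    obtain ⟨i, hzi⟩ := Set.mem_iUnion.mp hzd
    set M := (circleMeasure (I i)).toReal with hM
    have hzarc : |Complex.arg (z / ζmid i)| < Real.pi * M := by
      have h := (hmid i).2 ▸ hzi
      exact h.2
    have hM0 : 0 < Real.pi * M := lt_of_le_of_lt (abs_nonneg _) hzarc
    right
    rw [Set.mem_iUnion]
    refine ⟨i, ?_⟩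
    by_cases hsmall : 2 * Real.pi * M < 1
    · rw [if_pos hsmall]
      rw [mem_closure_iff_seq_limit]
      refine ⟨fun n : ℕ => ((1 - Real.pi * M/(n+1) : ℝ) : ℂ) * z, fun n => ?_, ?_⟩
      · have hn1 : (0:ℝ) < (n:ℝ) + 1 := by positivity
        have hq0 : 0 < Real.pi * M/(n+1) := by positivity
        have hq1 : Real.pi * M/(n+1) ≤ Real.pi * M := by
          rw [div_le_iff₀ hn1]
          nlinarith [hM0]
        have ha0 : (0:ℝ) < 1 - Real.pi * M/(n+1) := by nlinarith
        have habs : ‖((1 - Real.pi * M/(n+1) : ℝ) : ℂ) * z‖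
            = 1 - Real.pi * M/(n+1) := by
          rw [norm_mul, Complex.norm_real, Real.norm_eq_abs, hre, mul_one, abs_of_pos ha0]
        refine ⟨?_, ?_, ?_⟩
        · rw [habs]; nlinarith
        · rw [habs]; linarith
        · have : ((1 - Real.pi * M/(n+1) : ℝ) : ℂ) * z / ζmid i
              = ((1 - Real.pi * M/(n+1) : ℝ) : ℂ) * (z / ζmid i) := by ring
          rw [this, Complex.arg_real_mul _ ha0]
          linarith [hzarc]
      · have h0 : Filter.Tendsto (fun n : ℕ => Real.pi * M / (n+1)) atTop (nhds 0) := by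
          have := tendsto_one_div_add_atTop_nhds_zero_nat.const_mul (Real.pi * M)
          simpa [div_eq_mul_inv, mul_comm] using this
        have h1 : Filter.Tendsto (fun n : ℕ => (1 - Real.pi * M/(n+1) : ℝ)) atTop (nhds 1) := by
          have := (tendsto_const_nhds (x := (1:ℝ)) (f := atTop)).sub h0
          simpa using this
        have h2 : Filter.Tendsto (fun n : ℕ => ((1 - Real.pi * M/(n+1) : ℝ) : ℂ)) atTop
            (nhds (1:ℂ)) := by
          exact_mod_cast (Complex.continuous_ofReal.tendsto 1).comp h1
        have h3 := h2.mul_const z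
        simpa using h3
    · rw [if_neg hsmall, closure_ball (0:ℂ) one_ne_zero, Metric.mem_closedBall,
        dist_zero_right]
      exact hr1
  · -- interior case : 1/2 ≤ |z| < 1
    have hrlt : ‖z‖ < 1 := lt_of_le_of_ne hr1 hre
    set r := ‖z‖ with hr
    have hrpos : (0:ℝ) < r := by linarith
    have hz0 : z ≠ 0 := by
      intro h; rw [h, norm_zero] at hr; linarith [hr2, hr.symm ▸ hr2]
    set β : ℝ := 11/20 * (1 - r) with hβ
    have hβ0 : 0 < β := by rw [hβ]; nlinarith
    have hβπ : β < Real.pi := by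
      have := Real.pi_gt_three
      rw [hβ]; nlinarith
    set zdir : ℂ := ((r:ℝ) : ℂ)⁻¹ * z with hzdir
    have hrC : ((r:ℝ):ℂ) ≠ 0 := by
      exact_mod_cast hrpos.ne'
    have hzdirabs : ‖zdir‖ = 1 := by
      rw [hzdir, norm_mul, norm_inv, Complex.norm_real, Real.norm_eq_abs, abs_of_pos hrpos, ← hr]
      field_simp
    have hzdir0 : zdir ≠ 0 := by
      intro h; rw [h, norm_zero] at hzdirabs; norm_num at hzdirabs
    have hzr : z = ((r:ℝ):ℂ) * zdir := by
      rw [hzdir]; field_simp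
    have key : ∀ s : ℝ, |s| < β → Complex.exp ((s:ℂ)*Complex.I) * zdir ∉ K := by
      intro s hs hmem
      have hexp0 : Complex.exp ((s:ℂ)*Complex.I) ≠ 0 := Complex.exp_ne_zero _
      have habs1 : ‖Complex.exp ((s:ℂ)*Complex.I) * zdir‖ = 1 := by
        rw [norm_mul, Complex.norm_exp_ofReal_mul_I, hzdirabs, mul_one]
      have hdiv : z / (Complex.exp ((s:ℂ)*Complex.I) * zdir)
          = ((r:ℝ):ℂ) * Complex.exp (((-s : ℝ):ℂ)*Complex.I) := by
        rw [hzr]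
        push_cast
        rw [neg_mul, Complex.exp_neg]
        field_simp
      have hsπ : |s| < Real.pi := lt_trans hs hβπ
      have harg : Complex.arg (z / (Complex.exp ((s:ℂ)*Complex.I) * zdir)) = -s := by
        rw [hdiv, Complex.arg_real_mul _ hrpos]
        exact arg_exp_of_Ioc ⟨by linarith [abs_lt.mp hsπ |>.2], by linarith [abs_lt.mp hsπ |>.1]⟩
      have hstolz := mem_stolz habs1 hr2 hrlt (by rw [harg, abs_neg, ← hr, ← hβ]; exact hs)
      exact hzΩ (Set.mem_biUnion hmem hstolz)
    have hzdirK : zdir ∉ K := by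
      have h := key 0 (by simpa using hβ0)
      simpa using h
    have hzdsph : zdir ∈ Metric.sphere (0:ℂ) 1 := by
      rw [mem_sphere_zero_iff_norm]; exact hzdirabs
    have hzdmem : zdir ∈ (⋃ i, I i) := by rw [hIcover]; exact ⟨hzdsph, hzdirK⟩
    obtain ⟨i, hzi⟩ := Set.mem_iUnion.mp hzdmem
    set C : Set ℂ := (fun s : ℝ => Complex.exp ((s:ℂ)*Complex.I) * zdir) '' Set.Ioo (-β) β
      with hC
    have hCconn : IsPreconnected C := by
      apply IsPreconnected.image isPreconnected_Ioo
      apply Continuous.continuousOn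
      exact (Complex.continuous_exp.comp (Complex.continuous_ofReal.mul
        continuous_const)).mul continuous_const
    have hCsub : C ⊆ Metric.sphere (0:ℂ) 1 \ K := by
      rintro _ ⟨s, hs, rfl⟩
      refine ⟨?_, key s (abs_lt.mpr ⟨hs.1, hs.2⟩)⟩
      rw [mem_sphere_zero_iff_norm]
      show ‖_‖ = 1
      rw [norm_mul, Complex.norm_exp_ofReal_mul_I, hzdirabs, mul_one]
    have hzdC : zdir ∈ C := ⟨0, ⟨neg_lt_zero.mpr hβ0, hβ0⟩, by simp⟩
    obtain ⟨x₀, hx₀, hIi⟩ := hIcomp i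
    have hCIi : C ⊆ I i := by
      have h1 : connectedComponentIn (Metric.sphere (0:ℂ) 1 \ K) zdir = I i := by
        rw [hIi] at hzi ⊢
        exact (connectedComponentIn_eq hzi).symm
      rw [← h1]
      exact hCconn.subset_connectedComponentIn hzdC hCsub
    set M := (circleMeasure (I i)).toReal with hM
    have hζm : ‖ζmid i‖ = 1 := by
      have := (hmid i).1
      rwa [mem_sphere_zero_iff_norm] at this
    have hζm0 : ζmid i ≠ 0 := by
      intro h; rw [h, norm_zero] at hζm; norm_num at hζm
    set φ := Complex.arg (zdir / ζmid i) with hφ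
    have hφlt : |φ| < Real.pi * M := by
      have h := (hmid i).2 ▸ hzi
      exact h.2
    have hM0 : 0 < Real.pi * M := lt_of_le_of_lt (abs_nonneg _) hφlt
    right
    rw [Set.mem_iUnion]
    refine ⟨i, ?_⟩
    by_cases hsmall : 2 * Real.pi * M < 1
    · rw [if_pos hsmall]
      apply subset_closure
      -- key angular estimate
      have hkey2 : ∀ s : ℝ, s ∈ Set.Ioo (-β) β → |s + φ| < Real.pi * M := by
        intro s hs
        have hmemI : Complex.exp ((s:ℂ)*Complex.I) * zdir ∈ I i := hCIi ⟨s, hs, rfl⟩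
        rw [(hmid i).2] at hmemI
        have harg2 : Complex.arg (Complex.exp ((s:ℂ)*Complex.I) * zdir / ζmid i) = s + φ := by
          rw [mul_div_assoc]
          apply arg_exp_mul (div_ne_zero hzdir0 hζm0)
          have hβb : β ≤ 11/40 := by rw [hβ]; nlinarith
          have hsb : |s| < 11/40 := lt_of_lt_of_le (abs_lt.mpr ⟨hs.1, hs.2⟩) hβb
          have hφb : |φ| < 1/2 := by
            calc |φ| < Real.pi * M := hφlt
            _ < 1/2 := by linarith
          have hπ : (3:ℝ) < Real.pi := Real.pi_gt_three
          constructor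
          · have := abs_lt.mp hsb; have := abs_lt.mp hφb; linarith [this.1]
          · have h1 := (abs_lt.mp hsb).2; have h2 := (abs_lt.mp hφb).2; linarith
        have h2 : |Complex.arg (Complex.exp ((s:ℂ)*Complex.I) * zdir / ζmid i)|
            < Real.pi * M := hmemI.2
        rwa [harg2] at h2
      have hφM : φ < Real.pi * M := (abs_lt.mp hφlt).2
      have hφM' : -(Real.pi * M) < φ := (abs_lt.mp hφlt).1
      have hA : β + φ ≤ Real.pi * M := by
        by_contra hcon
        push_neg at hcon
        have hsmem : (Real.pi * M - φ) ∈ Set.Ioo (-β) β := by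
          constructor
          · linarith
          · linarith
        have := hkey2 _ hsmem
        rw [sub_add_cancel, abs_of_pos hM0] at this
        exact lt_irrefl _ this
      have hB : β - φ ≤ Real.pi * M := by
        by_contra hcon
        push_neg at hcon
        have hsmem : (-(Real.pi * M) - φ) ∈ Set.Ioo (-β) β := by
          constructor
          · linarith
          · linarith
        have := hkey2 _ hsmem
        rw [sub_add_cancel, abs_neg, abs_of_pos hM0] at this
        exact lt_irrefl _ this
      have h2β : 2 * β ≤ 2 * (Real.pi * M) := by linarith
      have hargz : Complex.arg (z / ζmid i) = φ := by
        rw [hzr]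
        have : ((r:ℝ):ℂ) * zdir / ζmid i = ((r:ℝ):ℂ) * (zdir / ζmid i) := by ring
        rw [this, Complex.arg_real_mul _ hrpos]
      refine ⟨?_, ?_, ?_⟩
      · rw [← hr, hβ] at *
        nlinarith [h2β, hrlt]
      · exact hrlt
      · rw [hargz]
        calc |φ| < Real.pi * M := hφlt
        _ < 2 * Real.pi * M := by linarith
    · rw [if_neg hsmall, closure_ball (0:ℂ) one_ne_zero, Metric.mem_closedBall,
        dist_zero_right]
      exact hr1
end
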